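/- arXiv:2401.10584 — 8 statements merged into one kernel-verified Lean document; each statement's English description precedes it below -/
import Mathlib

section
/- Let T be a tree and D a set of guards. If t_T(D) = t < +∞, then (T, D) has an arena X with ctd(X) ≤ t. -/
/-- Attacker wins within `t` turns in the mobile domination game. -/
def AttackerWinsIn {V : Type*} [DecidableEq V] (G : SimpleGraph V) :
    ℕ → Finset V → Prop
  | 0, _ => False
  | (t + 1), D => ∃ v, v ∉ D ∧
      ∀ u ∈ D, G.Adj u v → AttackerWinsIn G t (insert v (D.erase u))

/-- `t_G(D)`, the minimum number of turns in which Attacker can force a win;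
`⊤` iff `D` is an eternal dominating set. -/
noncomputable def gameValue {V : Type*} [DecidableEq V] (G : SimpleGraph V)
    (D : Finset V) : ℕ∞ :=
  sInf {n : ℕ∞ | ∃ t : ℕ, n = (t : ℕ∞) ∧ AttackerWinsIn G t D}

/-- `TreedepthLE G k` : there is a rooted forest of height at most `k` (encoded by
assigning to each vertex its root-to-vertex path, ancestor‑descendant = prefix) in
which the endpoints of every edge of `G` are in ancestor-descendant relation. -/
def TreedepthLE {W : Type*} (G : SimpleGraph W) (k : ℕ) : Prop :=
  ∃ ι : W → List ℕ, Function.Injective ι ∧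
    (∀ v, 1 ≤ (ι v).length ∧ (ι v).length ≤ k) ∧
    (∀ u v, G.Adj u v → ((ι u <+: ι v) ∨ (ι v <+: ι u)))

/-- The treedepth of a graph: the minimum height of such a rooted forest. -/
noncomputable def treedepth {W : Type*} (G : SimpleGraph W) : ℕ :=
  sInf {k | TreedepthLE G k}

/-- `X` is an arena of `(T, D)` : a subtree (nonempty connected induced subgraph)
of `T` such that (1) `X ∩ D` and `X \ D` are independent; (2) every guarded vertex
of `X` has degree exactly 2 in `X`; (3) no unguarded vertex of `X` has a guarded
neighbor outside `X`. -/
def IsArena {V : Type*} [DecidableEq V] (T : SimpleGraph V) [DecidableRel T.Adj]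
    (D X : Finset V) : Prop :=
  (T.induce (X : Set V)).Connected ∧
  (∀ u ∈ X, ∀ v ∈ X, u ∈ D → v ∈ D → ¬ T.Adj u v) ∧
  (∀ u ∈ X, ∀ v ∈ X, u ∉ D → v ∉ D → ¬ T.Adj u v) ∧
  (∀ u ∈ X, u ∈ D → (X.filter fun w => T.Adj u w).card = 2) ∧
  (∀ v ∈ X, v ∉ D → ∀ u, T.Adj v u → u ∈ D → u ∈ X)

/-- The contracted tree of an arena `X` : on the unguarded vertices of `X`, each
guarded vertex of `X` is replaced by an edge between its two neighbors in `X`. -/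
def contractedTree {V : Type*} [DecidableEq V] (T : SimpleGraph V)
    (D X : Finset V) : SimpleGraph {v // v ∈ X \ D} :=
  SimpleGraph.fromRel fun a b =>
    T.Adj a.1 b.1 ∨ ∃ g ∈ X ∩ D, T.Adj a.1 g ∧ T.Adj g b.1

/-- The contracted treedepth of an arena. -/
noncomputable def ctd {V : Type*} [DecidableEq V] (T : SimpleGraph V)
    (D X : Finset V) : ℕ :=
  treedepth (contractedTree T D X)

/-!
Induction on `t`. Let Attacker's first attack be at `v`. For each guard `u` next to `v`, the
position after Defender answers with `u` has, by induction, an arena of contracted treedepth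
at most `t - 1`; cutting it at `v` if needed leaves an arena for `D` without `u` that avoids `u`
and `v`. If `u` does not touch it, it is already an arena for `D`. Otherwise it hangs from `u`,
and since `T` is acyclic the pieces hanging from distinct guards are disjoint and non-adjacent,
so gluing all of them at `v` gives an arena for `D` whose contracted tree has `v` as a root
above the elimination forests of the pieces.
-/

namespace SimpleGraph

variable {V : Type*} {G : SimpleGraph V}

lemma Preconnected.exists_walk_support_subset {s : Set V} (hs : (G.induce s).Preconnected)
    {x y : V} (hx : x ∈ s) (hy : y ∈ s) : ∃ p : G.Walk x y, ∀ z ∈ p.support, z ∈ s := by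
  obtain ⟨p⟩ := hs ⟨x, hx⟩ ⟨y, hy⟩
  have hp : ∀ z ∈ (p.map (Embedding.induce s).toHom).support, z ∈ s := by
    intro z hz
    rw [Walk.support_map, List.mem_map] at hz
    obtain ⟨z', -, rfl⟩ := hz
    exact z'.2
  exact ⟨_, hp⟩

lemma induce_connected_of_forall_walk {s : Set V} {c : V} (hc : c ∈ s)
    (h : ∀ x ∈ s, ∃ p : G.Walk c x, ∀ z ∈ p.support, z ∈ s) : (G.induce s).Connected :=
  induce_connected_of_patches c hc fun hx => by
    obtain ⟨p, hp⟩ := h _ hx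
    exact ⟨_, hp, p.start_mem_support, p.end_mem_support,
      p.connected_induce_support.preconnected _ _⟩

lemma induce_insert_connected {s : Set V} (hs : (G.induce s).Connected) {a b : V}
    (hb : b ∈ s) (hab : G.Adj a b) : (G.induce (insert a s)).Connected := by
  have := induce_union_connected (induce_pair_connected_of_adj hab).preconnected
    hs.preconnected ⟨b, by simp, hb⟩
  rwa [Set.insert_union, Set.singleton_union, Set.insert_eq_of_mem hb] at this

lemma IsAcyclic.eq_of_adj_of_preconnected (hG : G.IsAcyclic) {s : Set V}
    (hs : (G.induce s).Preconnected) {w a b : V} (hw : w ∉ s) (ha : a ∈ s) (hb : b ∈ s)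
    (hwa : G.Adj w a) (hwb : G.Adj w b) : a = b := by
  obtain ⟨q, hq⟩ := hs.exists_walk_support_subset hb ha
  have := isBridge_iff_forall_walk_mem_edges.1 (isAcyclic_iff_forall_adj_isBridge.1 hG hwa)
    (q.cons hwb)
  rw [Walk.edges_cons, List.mem_cons] at this
  rcases this with h | h
  · exact Sym2.congr_right.1 h
  · exact absurd (hq w (q.fst_mem_support_of_mem_edges h)) hw

end SimpleGraph

open SimpleGraph

section Labelling

variable {V : Type*}

/-- A labelling `ι` of the vertices in `S` by root-to-vertex paths of a rooted forest of height
at most `k`, in which `R`-related vertices are in ancestor–descendant relation. -/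
def IsTreedepthLabelling (S : Set V) (R : V → V → Prop) (ι : V → List ℕ) (k : ℕ) :
    Prop :=
  S.InjOn ι ∧ (∀ x ∈ S, 1 ≤ (ι x).length ∧ (ι x).length ≤ k) ∧
    ∀ x ∈ S, ∀ y ∈ S, R x y → ι x <+: ι y ∨ ι y <+: ι x

namespace IsTreedepthLabelling

variable {S S' : Set V} {R R' : V → V → Prop} {ι : V → List ℕ} {k k' : ℕ}

lemma mono (h : IsTreedepthLabelling S R ι k) (hS : S' ⊆ S)
    (hR : ∀ x ∈ S', ∀ y ∈ S', x ≠ y → R' x y → R x y) (hk : k ≤ k') :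
    IsTreedepthLabelling S' R' ι k' := by
  obtain ⟨hinj, hlen, hpre⟩ := h
  refine ⟨hinj.mono hS, fun x hx => ⟨(hlen x (hS hx)).1, (hlen x (hS hx)).2.trans hk⟩,
    fun x hx y hy hxy => ?_⟩
  by_cases hne : x = y
  · exact Or.inl (hne ▸ List.prefix_refl _)
  · exact hpre x (hS hx) y (hS hy) (hR x hx y hy hne hxy)

lemma treedepthLE {p : V → Prop} {G : SimpleGraph {x // p x}}
    (h : IsTreedepthLabelling {x | p x} R ι k) (hG : ∀ a b, G.Adj a b → R a b ∨ R b a) :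
    TreedepthLE G k := by
  obtain ⟨hinj, hlen, hpre⟩ := h
  refine ⟨fun a => ι a, fun a b hab => Subtype.ext (hinj a.2 b.2 hab), fun a => hlen a a.2,
    fun a b hab => ?_⟩
  rcases hG a b hab with h | h
  · exact hpre a a.2 b b.2 h
  · exact (hpre b b.2 a a.2 h).symm

end IsTreedepthLabelling

lemma List.map_pair_injective {i j : ℕ} {l l' : List ℕ} (hl : l ≠ [])
    (h : l.map (Nat.pair i) = l'.map (Nat.pair j)) : i = j ∧ l = l' := by
  obtain ⟨a, r, rfl⟩ := List.exists_cons_of_ne_nil hl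
  obtain ⟨b, r', rfl⟩ := List.exists_cons_of_ne_nil (l := l') (by rintro rfl; simp at h)
  rw [List.map_cons, List.map_cons, List.cons.injEq, Nat.pair_eq_pair] at h
  obtain ⟨⟨rfl, rfl⟩, h⟩ := h
  have hinj : Function.Injective (Nat.pair i) := fun b c hbc => (Nat.pair_eq_pair.1 hbc).2
  exact ⟨rfl, by rw [List.map_injective_iff.2 hinj h]⟩

lemma exists_isTreedepthLabelling_insert_iUnion {I : Type*} [Countable I] {U : Set I}
    {S : I → Set V} {R : V → V → Prop} {v : V} {k : ℕ} (hv : ∀ i ∈ U, v ∉ S i)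
    (hsep : ∀ i ∈ U, ∀ j ∈ U, ∀ x ∈ S i, ∀ y ∈ S j, (x = y ∨ R x y) → i = j)
    (h : ∀ i ∈ U, ∃ ι, IsTreedepthLabelling (S i) R ι k) :
    ∃ ι, IsTreedepthLabelling (insert v (⋃ i ∈ U, S i)) R ι (k + 1) := by
  classical
  obtain ⟨e, he⟩ := Countable.exists_injective_nat I
  choose! ιs hιs using h
  -- the pieces are told apart by pairing every entry of a label with the index of its piece
  let ι : V → List ℕ := fun x =>
    if hx : ∃ i ∈ U, x ∈ S i then 0 :: (ιs hx.choose x).map (Nat.pair (e hx.choose)) else [0]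
  have hιv : ι v = [0] := dif_neg fun ⟨i, hi, hvi⟩ => hv i hi hvi
  have hι : ∀ i ∈ U, ∀ x ∈ S i, ι x = 0 :: (ιs i x).map (Nat.pair (e i)) := by
    intro i hi x hx
    have hex : ∃ i ∈ U, x ∈ S i := ⟨i, hi, hx⟩
    have hchoose : hex.choose = i :=
      hsep _ hex.choose_spec.1 i hi x hex.choose_spec.2 x hx (Or.inl rfl)
    simp only [ι, dif_pos hex, hchoose]
  have hne : ∀ i ∈ U, ∀ x ∈ S i, ιs i x ≠ [] := fun i hi x hx hnil => by
    simpa [hnil] using ((hιs i hi).2.1 x hx).1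
  refine ⟨ι, ?_, ?_, ?_⟩
  · rintro x hx y hy hxy
    simp only [Set.mem_insert_iff, Set.mem_iUnion] at hx hy
    rcases hx with rfl | ⟨i, hi, hx⟩ <;> rcases hy with rfl | ⟨j, hj, hy⟩
    · rfl
    · simp [hιv, hι j hj y hy, hne j hj y hy] at hxy
    · simp [hιv, hι i hi x hx, hne i hi x hx] at hxy
    · rw [hι i hi x hx, hι j hj y hy, List.cons.injEq] at hxy
      obtain ⟨hij, hxy⟩ := List.map_pair_injective (hne i hi x hx) hxy.2
      obtain rfl := he hij
      exact (hιs i hi).1 hx hy hxy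
  · intro x hx
    simp only [Set.mem_insert_iff, Set.mem_iUnion] at hx
    rcases hx with rfl | ⟨i, hi, hx⟩
    · simp [hιv]
    · have := (hιs i hi).2.1 x hx
      simp only [hι i hi x hx, List.length_cons, List.length_map]
      omega
  · intro x hx y hy hxy
    simp only [Set.mem_insert_iff, Set.mem_iUnion] at hx hy
    rcases hx with rfl | ⟨i, hi, hx⟩ <;> rcases hy with rfl | ⟨j, hj, hy⟩
    · exact Or.inl (List.prefix_refl _)
    · exact Or.inl (by simp [hιv, hι j hj y hy])
    · exact Or.inr (by simp [hιv, hι i hi x hx])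
    · obtain rfl := hsep i hi j hj x hx y hy (Or.inr hxy)
      rw [hι i hi x hx, hι i hi y hy]
      simp only [List.cons_prefix_cons, true_and]
      exact ((hιs i hi).2.2 x hx y hy hxy).imp (·.map _) (·.map _)

end Labelling

section Branch

variable {V : Type*} [DecidableEq V] {T : SimpleGraph V} {X : Finset V} {w c x y : V}

open Classical in
variable (T) in
noncomputable def branch (X : Finset V) (w c : V) : Finset V :=
  (X.erase w).filter fun x => ∃ p : T.Walk c x, ∀ z ∈ p.support, z ∈ X.erase w

lemma mem_branch : x ∈ branch T X w c ↔
    x ∈ X.erase w ∧ ∃ p : T.Walk c x, ∀ z ∈ p.support, z ∈ X.erase w := by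
  classical
  simp only [branch, Finset.mem_filter]

lemma branch_subset : branch T X w c ⊆ X.erase w := fun _ hx => (mem_branch.1 hx).1

lemma self_mem_branch (hc : c ∈ X.erase w) : c ∈ branch T X w c :=
  mem_branch.2 ⟨hc, Walk.nil, by simpa using hc⟩

lemma mem_branch_of_adj (hx : x ∈ branch T X w c) (hy : y ∈ X.erase w) (hxy : T.Adj x y) :
    y ∈ branch T X w c := by
  obtain ⟨-, p, hp⟩ := mem_branch.1 hx
  refine mem_branch.2 ⟨hy, p.concat hxy, fun z hz => ?_⟩
  rw [Walk.support_concat, List.mem_append, List.mem_singleton] at hz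
  rcases hz with hz | rfl
  exacts [hp z hz, hy]

lemma induce_branch_connected (hc : c ∈ X.erase w) :
    (T.induce (branch T X w c : Set V)).Connected :=
  induce_connected_of_forall_walk (self_mem_branch hc) fun x hx => by
    obtain ⟨-, p, hp⟩ := mem_branch.1 hx
    exact ⟨p, fun z hz => mem_branch.2 ⟨hp z hz, p.takeUntil z hz,
      fun z' hz' => hp z' (p.support_takeUntil_subset_support hz hz')⟩⟩

end Branch

section Arena

variable {V : Type*} [DecidableEq V] {T : SimpleGraph V} [DecidableRel T.Adj]
  {D D' X P : Finset V} {k : ℕ} {u v w c x y g : V}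

namespace IsArena

lemma connected (h : IsArena T D X) : (T.induce (X : Set V)).Connected := h.1

lemma not_adj_of_mem (h : IsArena T D X) (hx : x ∈ X) (hy : y ∈ X) (hxD : x ∈ D)
    (hyD : y ∈ D) : ¬ T.Adj x y := h.2.1 x hx y hy hxD hyD

lemma not_adj_of_notMem (h : IsArena T D X) (hx : x ∈ X) (hy : y ∈ X) (hxD : x ∉ D)
    (hyD : y ∉ D) : ¬ T.Adj x y := h.2.2.1 x hx y hy hxD hyD

lemma card_filter_adj (h : IsArena T D X) (hg : g ∈ X) (hgD : g ∈ D) :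
    (X.filter (T.Adj g)).card = 2 := h.2.2.2.1 g hg hgD

lemma mem_of_adj (h : IsArena T D X) (hx : x ∈ X) (hxD : x ∉ D) (hxg : T.Adj x g)
    (hgD : g ∈ D) : g ∈ X := h.2.2.2.2 x hx hxD g hxg hgD

end IsArena

variable (T) in
/-- Adjacency in the contracted tree, read on the vertices of `T`. -/
def ContractedAdj (D : Finset V) (x y : V) : Prop :=
  T.Adj x y ∨ ∃ g ∈ D, T.Adj x g ∧ T.Adj g y

variable (T) in
structure IsArenaOfDepth (D X : Finset V) (k : ℕ) : Prop where
  isArena : IsArena T D X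
  exists_labelling : ∃ ι, IsTreedepthLabelling ↑(X \ D) (ContractedAdj T D) ι k

namespace IsArenaOfDepth

lemma ctd_le (h : IsArenaOfDepth T D X k) : ctd T D X ≤ k := by
  obtain ⟨-, ι, hι⟩ := h
  refine Nat.sInf_le (hι.treedepthLE (p := (· ∈ X \ D)) ?_)
  rintro a b ⟨-, hab⟩
  refine hab.imp ?_ ?_ <;>
    exact Or.imp_right fun ⟨g, hg, h1, h2⟩ => ⟨g, (Finset.mem_inter.1 hg).2, h1, h2⟩

lemma mono {k' : ℕ} (h : IsArenaOfDepth T D X k) (hk : k ≤ k') : IsArenaOfDepth T D X k' :=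
  ⟨h.isArena, h.exists_labelling.imp fun _ hι => hι.mono subset_rfl (fun _ _ _ _ _ => id) hk⟩

lemma restrict (h : IsArenaOfDepth T D X k) (hPX : P ⊆ X)
    (hconn : (T.induce (P : Set V)).Connected) (hD : ∀ x ∈ P, x ∈ D' ↔ x ∈ D)
    (hclosed : ∀ x ∈ P, ∀ y ∈ X, T.Adj x y → (x ∈ D' ∨ y ∈ D') → y ∈ P)
    (hnbr : ∀ x ∈ P, x ∉ D' → ∀ g ∈ D', T.Adj x g → g ∈ D) :
    IsArenaOfDepth T D' P k := by
  obtain ⟨hX, ι, hι⟩ := h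
  refine ⟨⟨hconn, ?_, ?_, ?_, ?_⟩, ι, hι.mono ?_ ?_ le_rfl⟩
  · intro x hx y hy hxD hyD
    exact hX.not_adj_of_mem (hPX hx) (hPX hy) ((hD x hx).1 hxD) ((hD y hy).1 hyD)
  · intro x hx y hy hxD hyD
    exact hX.not_adj_of_notMem (hPX hx) (hPX hy) (mt (hD x hx).2 hxD) (mt (hD y hy).2 hyD)
  · intro g hg hgD
    have : P.filter (T.Adj g) = X.filter (T.Adj g) := by
      ext y
      simp only [Finset.mem_filter]
      exact ⟨fun ⟨hy, hgy⟩ => ⟨hPX hy, hgy⟩,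
        fun ⟨hy, hgy⟩ => ⟨hclosed g hg y hy hgy (Or.inl hgD), hgy⟩⟩
    rw [this]
    exact hX.card_filter_adj (hPX hg) ((hD g hg).1 hgD)
  · intro x hx hxD g hxg hgD
    exact hclosed x hx g (hX.mem_of_adj (hPX hx) (mt (hD x hx).2 hxD) hxg
      (hnbr x hx hxD g hgD hxg)) hxg (Or.inr hgD)
  · intro x hx
    simp only [Finset.coe_sdiff, Set.mem_sdiff, Finset.mem_coe] at hx ⊢
    exact ⟨hPX hx.1, mt (hD x hx.1).2 hx.2⟩
  · rintro x hx y - - (hxy | ⟨g, hg, hxg, hgy⟩)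
    · exact Or.inl hxy
    · exact Or.inr ⟨g, hnbr x (Finset.mem_sdiff.1 hx).1 (Finset.mem_sdiff.1 hx).2 g hg hxg,
        hxg, hgy⟩

end IsArenaOfDepth

lemma IsArenaOfDepth.erase_branch (h : IsArenaOfDepth T D X k) (hwD : w ∈ D) (hc : c ∈ X)
    (hwc : T.Adj w c) : IsArenaOfDepth T (D.erase w) (branch T X w c) k := by
  have hcX : c ∈ X.erase w := Finset.mem_erase.2 ⟨hwc.ne', hc⟩
  refine h.restrict (branch_subset.trans (Finset.erase_subset _ _))
    (induce_branch_connected hcX) (fun x hx => ?_) (fun x hx y hy hxy hD => ?_)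
    (fun _ _ _ _ hg _ => Finset.mem_of_mem_erase hg)
  · rw [Finset.mem_erase, and_iff_right (Finset.mem_erase.1 (branch_subset hx)).1]
  · refine mem_branch_of_adj hx (Finset.mem_erase.2 ⟨?_, hy⟩) hxy
    rintro rfl
    have hxD : x ∈ D := Finset.mem_of_mem_erase (hD.resolve_right (Finset.notMem_erase _ _))
    exact h.isArena.not_adj_of_mem (Finset.mem_of_mem_erase (branch_subset hx)) hy hxD hwD hxy

/-- `insert v (D.erase u)` is the position after Defender answers the attack on `v` with the
guard `u`. -/
lemma IsArenaOfDepth.exists_erase (hT : T.IsAcyclic) (hvD : v ∉ D) (huv : T.Adj u v)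
    (h : IsArenaOfDepth T (insert v (D.erase u)) X k) :
    ∃ Y, IsArenaOfDepth T (D.erase u) Y k ∧ v ∉ Y ∧ u ∉ Y := by
  have hvDu : v ∉ D.erase u := fun hv => hvD (Finset.mem_of_mem_erase hv)
  by_cases hvX : v ∈ X
  · obtain ⟨c, hc, hcu⟩ := Finset.exists_mem_ne
      (by rw [h.isArena.card_filter_adj hvX (Finset.mem_insert_self _ _)]; norm_num) u
    rw [Finset.mem_filter] at hc
    have hY := h.erase_branch (Finset.mem_insert_self _ _) hc.1 hc.2
    rw [Finset.erase_insert hvDu] at hY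
    have hvY : v ∉ branch T X v c := fun hv => (Finset.mem_erase.1 (branch_subset hv)).1 rfl
    refine ⟨_, hY, hvY, fun huY => hcu ?_⟩
    exact hT.eq_of_adj_of_preconnected hY.isArena.connected.preconnected hvY
      (self_mem_branch (Finset.mem_erase.2 ⟨hc.2.ne', hc.1⟩)) huY hc.2 huv.symm
  · have huX : u ∉ X := fun huX =>
      hvX (h.isArena.mem_of_adj huX (by simp [huv.ne]) huv (Finset.mem_insert_self _ _))
    refine ⟨X, h.restrict subset_rfl h.isArena.connected (fun x hx => ?_)
      (fun _ _ _ hy _ _ => hy) (fun _ _ _ _ hg _ => Finset.mem_insert_of_mem hg), hvX, huX⟩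
    rw [Finset.mem_insert, or_iff_right (ne_of_mem_of_not_mem hx hvX)]

end Arena

section HalfArena

variable {V : Type*} [DecidableEq V] {T : SimpleGraph V} [DecidableRel T.Adj]
  {D H H' : Finset V} {k : ℕ} {u u' v x y g g' : V}

variable (T) in
/-- The piece of the final arena that hangs from the guard `u` next to the attacked vertex `v`. -/
structure IsHalfArena (D : Finset V) (v u : V) (H : Finset V) (k : ℕ) : Prop where
  isArenaOfDepth : IsArenaOfDepth T (D.erase u) H k
  attacked_notMem : v ∉ H
  guard_notMem : u ∉ H
  exists_adj_guard : ∃ y ∈ H, y ∉ D ∧ T.Adj u y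

lemma IsArenaOfDepth.exists_isArenaOfDepth_or_isHalfArena {X : Finset V} (hT : T.IsAcyclic)
    (hvD : v ∉ D) (huv : T.Adj u v) (h : IsArenaOfDepth T (insert v (D.erase u)) X k) :
    (∃ Y, IsArenaOfDepth T D Y k) ∨ ∃ H, IsHalfArena T D v u H k := by
  obtain ⟨Y, hY, hvY, huY⟩ := h.exists_erase hT hvD huv
  by_cases htouch : ∃ y ∈ Y, y ∉ D ∧ T.Adj u y
  · exact Or.inr ⟨Y, ⟨hY, hvY, huY, htouch⟩⟩
  push Not at htouch
  refine Or.inl ⟨Y, hY.restrict subset_rfl hY.isArena.connected (fun x hx => ?_)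
    (fun _ _ _ hy _ _ => hy) (fun x hx hxD g hg hxg => ?_)⟩
  · rw [Finset.mem_erase, and_iff_right (ne_of_mem_of_not_mem hx huY)]
  · exact Finset.mem_erase.2 ⟨fun hgu => htouch x hx hxD (hgu ▸ hxg.symm), hg⟩

namespace IsHalfArena

lemma isArena (h : IsHalfArena T D v u H k) : IsArena T (D.erase u) H := h.isArenaOfDepth.isArena

lemma mem_erase_of_mem (h : IsHalfArena T D v u H k) (hx : x ∈ H) (hxD : x ∈ D) :
    x ∈ D.erase u :=
  Finset.mem_erase.2 ⟨ne_of_mem_of_not_mem hx h.guard_notMem, hxD⟩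

lemma insert_connected (h : IsHalfArena T D v u H k) :
    (T.induce (insert u H : Finset V)).Connected := by
  obtain ⟨y, hy, -, huy⟩ := h.exists_adj_guard
  rw [Finset.coe_insert]
  exact induce_insert_connected h.isArena.connected hy huy

lemma eq_of_adj (hT : T.IsAcyclic) (h : IsHalfArena T D v u H k) (hx : x ∈ H) (hy : y ∈ H)
    (hux : T.Adj u x) (huy : T.Adj u y) : x = y :=
  hT.eq_of_adj_of_preconnected h.isArena.connected.preconnected h.guard_notMem hx hy hux huy

lemma not_adj (hT : T.IsAcyclic) (h : IsHalfArena T D v u H k) (huv : T.Adj u v) (hx : x ∈ H) :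
    ¬ T.Adj v x := fun hvx => by
  have hv : v ∉ (insert u H : Finset V) := by simp [huv.ne', h.attacked_notMem]
  obtain rfl := hT.eq_of_adj_of_preconnected h.insert_connected.preconnected hv
    (Finset.mem_insert_of_mem hx) (Finset.mem_insert_self u H) hvx huv.symm
  exact h.guard_notMem hx

lemma mem_of_adj (h : IsHalfArena T D v u H k) (hx : x ∈ H) (hxD : x ∉ D) (hxg : T.Adj x g)
    (hgD : g ∈ D) : g ∈ insert u H := by
  rw [Finset.mem_insert, or_iff_not_imp_left]
  exact fun hgu => h.isArena.mem_of_adj hx (fun hx' => hxD (Finset.mem_of_mem_erase hx')) hxg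
    (Finset.mem_erase.2 ⟨hgu, hgD⟩)

lemma not_adj_of_mem (hT : T.IsAcyclic) (h : IsHalfArena T D v u H k) (hg : g ∈ insert u H)
    (hg' : g' ∈ insert u H) (hgD : g ∈ D) (hg'D : g' ∈ D) : ¬ T.Adj g g' := by
  obtain ⟨y, hy, hyD, huy⟩ := h.exists_adj_guard
  have hne : ∀ {a}, a ∈ H → a ∈ D → ¬ T.Adj u a := fun ha haD hua =>
    hyD (h.eq_of_adj hT ha hy hua huy ▸ haD)
  rw [Finset.mem_insert] at hg hg'
  rcases hg with rfl | hg <;> rcases hg' with rfl | hg'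
  · exact T.loopless.irrefl _
  · exact hne hg' hg'D
  · exact fun hgg' => hne hg hgD hgg'.symm
  · exact h.isArena.not_adj_of_mem hg hg' (h.mem_erase_of_mem hg hgD) (h.mem_erase_of_mem hg' hg'D)

lemma eq_of_eq_or_adj (hT : T.IsAcyclic) (h : IsHalfArena T D v u H k)
    (h' : IsHalfArena T D v u' H' k) (huv : T.Adj u v) (hu'v : T.Adj u' v)
    (hx : x ∈ insert u H) (hy : y ∈ insert u' H') (hxy : x = y ∨ T.Adj x y) : u = u' := by
  have hconn : (T.induce ((insert u H : Finset V) ∪ (insert u' H' : Finset V))).Connected := by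
    rcases hxy with rfl | hxy
    · exact induce_union_connected h.insert_connected.preconnected
        h'.insert_connected.preconnected ⟨x, hx, hy⟩
    · exact connected_induce_union h.insert_connected.preconnected
        h'.insert_connected.preconnected hx hy hxy
  have hv : v ∉ ((insert u H : Finset V) : Set V) ∪ (insert u' H' : Finset V) := by
    simp [huv.ne', hu'v.ne', h.attacked_notMem, h'.attacked_notMem]
  exact hT.eq_of_adj_of_preconnected hconn.preconnected hv (by simp) (by simp) huv.symm hu'v.symm

lemma eq_of_contractedAdj (hT : T.IsAcyclic) (h : IsHalfArena T D v u H k)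
    (h' : IsHalfArena T D v u' H' k) (huv : T.Adj u v) (hu'v : T.Adj u' v) (hx : x ∈ H \ D)
    (hy : y ∈ H' \ D) (hxy : x = y ∨ ContractedAdj T D x y) : u = u' := by
  rw [Finset.mem_sdiff] at hx hy
  rcases hxy with hxy | hxy | ⟨g, hg, hxg, hgy⟩
  · exact h.eq_of_eq_or_adj hT h' huv hu'v (Finset.mem_insert_of_mem hx.1)
      (Finset.mem_insert_of_mem hy.1) (Or.inl hxy)
  · exact h.eq_of_eq_or_adj hT h' huv hu'v (Finset.mem_insert_of_mem hx.1)
      (Finset.mem_insert_of_mem hy.1) (Or.inr hxy)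
  · exact h.eq_of_eq_or_adj hT h' huv hu'v (h.mem_of_adj hx.1 hx.2 hxg hg)
      (h'.mem_of_adj hy.1 hy.2 hgy.symm hg) (Or.inl rfl)

lemma exists_labelling (hT : T.IsAcyclic) (h : IsHalfArena T D v u H k) :
    ∃ ι, IsTreedepthLabelling ↑(H \ D) (ContractedAdj T D) ι k := by
  obtain ⟨ι, hι⟩ := h.isArenaOfDepth.exists_labelling
  refine ⟨ι, hι.mono (Finset.coe_subset.2 (Finset.sdiff_subset_sdiff subset_rfl
    (Finset.erase_subset _ _))) ?_ le_rfl⟩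
  rintro x hx y hy hxy (hxy' | ⟨g, hg, hxg, hgy⟩)
  · exact Or.inl hxy'
  · refine Or.inr ⟨g, Finset.mem_erase.2 ⟨?_, hg⟩, hxg, hgy⟩
    rintro rfl
    exact hxy (h.eq_of_adj hT (Finset.mem_sdiff.1 hx).1 (Finset.mem_sdiff.1 hy).1 hxg.symm hgy)

end IsHalfArena

end HalfArena

section Glue

variable {V : Type*} [DecidableEq V] {T : SimpleGraph V} [DecidableRel T.Adj]
  {D : Finset V} {Y : V → Finset V} {k : ℕ} {u v x y g : V}

variable (T) in
def glue (D : Finset V) (v : V) (Y : V → Finset V) : Finset V :=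
  insert v ((D.filter (T.Adj · v)).biUnion fun u => insert u (Y u))

lemma mem_glue :
    x ∈ glue T D v Y ↔ x = v ∨ ∃ u ∈ D, T.Adj u v ∧ x ∈ insert u (Y u) := by
  simp only [glue, Finset.mem_insert, Finset.mem_biUnion, Finset.mem_filter, and_assoc]

lemma insert_insert_subset_glue (hu : u ∈ D) (huv : T.Adj u v) :
    insert v (insert u (Y u)) ⊆ glue T D v Y :=
  fun _ hx => mem_glue.2 ((Finset.mem_insert.1 hx).imp_right fun hx => ⟨_, hu, huv, hx⟩)

lemma eq_or_mem_of_adj_of_mem_glue (hT : T.IsAcyclic)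
    (hY : ∀ u ∈ D, T.Adj u v → IsHalfArena T D v u (Y u) k) (hu : u ∈ D) (huv : T.Adj u v)
    (hx : x ∈ insert u (Y u)) (hy : y ∈ glue T D v Y) (hxy : T.Adj x y) :
    y = v ∨ y ∈ insert u (Y u) := by
  refine (mem_glue.1 hy).imp_right fun ⟨u', hu', hu'v, hy'⟩ => ?_
  obtain rfl := (hY u hu huv).eq_of_eq_or_adj hT (hY u' hu' hu'v) huv hu'v hx hy' (Or.inr hxy)
  exact hy'

lemma induce_glue_connected (hY : ∀ u ∈ D, T.Adj u v → IsHalfArena T D v u (Y u) k) :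
    (T.induce (glue T D v Y : Set V)).Connected := by
  refine induce_connected_of_patches v (mem_glue.2 (Or.inl rfl)) fun {x} hx => ?_
  rcases mem_glue.1 hx with rfl | ⟨u, hu, huv, hx⟩
  · exact ⟨{x}, by simpa using hx, rfl, rfl, Reachable.refl _⟩
  · have hconn := induce_insert_connected (hY u hu huv).insert_connected
      (Finset.mem_insert_self u (Y u)) huv.symm
    rw [← Finset.coe_insert] at hconn
    exact ⟨_, Finset.coe_subset.2 (insert_insert_subset_glue hu huv), by simp,
      Finset.mem_insert_of_mem hx, hconn.preconnected _ _⟩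

lemma card_filter_adj_glue (hT : T.IsAcyclic) (hvD : v ∉ D)
    (hY : ∀ u ∈ D, T.Adj u v → IsHalfArena T D v u (Y u) k) (hg : g ∈ glue T D v Y)
    (hgD : g ∈ D) : ((glue T D v Y).filter (T.Adj g)).card = 2 := by
  obtain ⟨u, hu, huv, hg⟩ := (mem_glue.1 hg).resolve_left (ne_of_mem_of_not_mem hgD hvD)
  have hH := hY u hu huv
  have hfilter : (glue T D v Y).filter (T.Adj g) =
      (insert v (insert u (Y u))).filter (T.Adj g) := by
    ext y
    simp only [Finset.mem_filter]
    exact ⟨fun ⟨hy, hgy⟩ => ⟨Finset.mem_insert.2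
      (eq_or_mem_of_adj_of_mem_glue hT hY hu huv hg hy hgy), hgy⟩,
      fun ⟨hy, hgy⟩ => ⟨insert_insert_subset_glue hu huv hy, hgy⟩⟩
  rw [hfilter]
  rcases Finset.mem_insert.1 hg with rfl | hgY
  · obtain ⟨y, hy, -, hgy⟩ := hH.exists_adj_guard
    have : (insert v (insert g (Y g))).filter (T.Adj g) = {v, y} := by
      ext z
      simp only [Finset.mem_filter, Finset.mem_insert, Finset.mem_singleton]
      constructor
      · rintro ⟨rfl | rfl | hz, hgz⟩
        · exact Or.inl rfl
        · exact absurd hgz (T.loopless.irrefl _)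
        · exact Or.inr (hH.eq_of_adj hT hz hy hgz hgy)
      · rintro (rfl | rfl)
        exacts [⟨Or.inl rfl, huv⟩, ⟨Or.inr (Or.inr hy), hgy⟩]
    rw [this, Finset.card_pair (ne_of_mem_of_not_mem hy hH.attacked_notMem).symm]
  · rw [Finset.filter_insert, if_neg fun hgv => hH.not_adj hT huv hgY hgv.symm,
      Finset.filter_insert, if_neg (hH.not_adj_of_mem hT (Finset.mem_insert_of_mem hgY)
        (Finset.mem_insert_self u _) hgD hu)]
    exact hH.isArena.card_filter_adj hgY (hH.mem_erase_of_mem hgY hgD)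

lemma isArena_glue (hT : T.IsAcyclic) (hvD : v ∉ D)
    (hY : ∀ u ∈ D, T.Adj u v → IsHalfArena T D v u (Y u) k) : IsArena T D (glue T D v Y) := by
  have hmemY : ∀ {u x}, x ∈ insert u (Y u) → x ∉ D → u ∈ D → x ∈ Y u :=
    fun hx hxD hu => (Finset.mem_insert.1 hx).resolve_left (by rintro rfl; exact hxD hu)
  refine ⟨induce_glue_connected hY, ?_, ?_,
    fun g hg hgD => card_filter_adj_glue hT hvD hY hg hgD, ?_⟩
  · intro g hg g' hg' hgD hg'D hgg'
    obtain ⟨u, hu, huv, hg⟩ := (mem_glue.1 hg).resolve_left (ne_of_mem_of_not_mem hgD hvD)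
    have hg'u := (eq_or_mem_of_adj_of_mem_glue hT hY hu huv hg hg' hgg').resolve_left
      (ne_of_mem_of_not_mem hg'D hvD)
    exact (hY u hu huv).not_adj_of_mem hT hg hg'u hgD hg'D hgg'
  · intro x hxX y hyX hxD hyD hxy
    rcases mem_glue.1 hxX with rfl | ⟨u, hu, huv, hx⟩
    · obtain ⟨u, hu, huv, hy⟩ := (mem_glue.1 hyX).resolve_left hxy.ne.symm
      exact (hY u hu huv).not_adj hT huv (hmemY hy hyD hu) hxy
    · rcases eq_or_mem_of_adj_of_mem_glue hT hY hu huv hx hyX hxy with rfl | hy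
      · exact (hY u hu huv).not_adj hT huv (hmemY hx hxD hu) hxy.symm
      · exact (hY u hu huv).isArena.not_adj_of_notMem (hmemY hx hxD hu) (hmemY hy hyD hu)
          (fun h => hxD (Finset.mem_of_mem_erase h)) (fun h => hyD (Finset.mem_of_mem_erase h))
          hxy
  · intro x hx hxD g hxg hgD
    rcases mem_glue.1 hx with rfl | ⟨u, hu, huv, hx⟩
    · exact insert_insert_subset_glue hgD hxg.symm (by simp)
    · exact insert_insert_subset_glue hu huv (Finset.mem_insert_of_mem
        ((hY u hu huv).mem_of_adj (hmemY hx hxD hu) hxD hxg hgD))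

lemma isArenaOfDepth_glue [Countable V] (hT : T.IsAcyclic) (hvD : v ∉ D)
    (hY : ∀ u ∈ D, T.Adj u v → IsHalfArena T D v u (Y u) k) :
    IsArenaOfDepth T D (glue T D v Y) (k + 1) := by
  obtain ⟨ι, hι⟩ := exists_isTreedepthLabelling_insert_iUnion
    (U := {u | u ∈ D ∧ T.Adj u v})
    (fun u hu hvY => (hY u hu.1 hu.2).attacked_notMem (Finset.mem_sdiff.1 hvY).1)
    (fun u hu u' hu' x hx y hy hxy =>
      (hY u hu.1 hu.2).eq_of_contractedAdj hT (hY u' hu'.1 hu'.2) hu.2 hu'.2 hx hy hxy)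
    (fun u hu => (hY u hu.1 hu.2).exists_labelling hT)
  refine ⟨isArena_glue hT hvD hY, ι, hι.mono (fun x hx => ?_) (fun _ _ _ _ _ => id) le_rfl⟩
  rw [Finset.coe_sdiff, Set.mem_sdiff, Finset.mem_coe, Finset.mem_coe, mem_glue] at hx
  rcases hx with ⟨rfl | ⟨u, hu, huv, hx⟩, hxD⟩
  · exact Set.mem_insert _ _
  · refine Set.mem_insert_of_mem _ (Set.mem_biUnion ⟨hu, huv⟩ ?_)
    rw [Finset.coe_sdiff, Set.mem_sdiff, Finset.mem_coe, Finset.mem_coe]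
    exact ⟨(Finset.mem_insert.1 hx).resolve_left (by rintro rfl; exact hxD hu), hxD⟩

theorem exists_isArenaOfDepth_of_attackerWinsIn [Countable V] (hT : T.IsAcyclic) :
    ∀ {D : Finset V}, AttackerWinsIn T k D → ∃ X, IsArenaOfDepth T D X k := by
  induction k with
  | zero => exact fun h => h.elim
  | succ k ih =>
    rintro D ⟨v, hvD, hwin⟩
    by_cases hD : ∃ X, IsArenaOfDepth T D X k
    · obtain ⟨X, hX⟩ := hD
      exact ⟨X, hX.mono k.le_succ⟩
    have hY : ∀ u ∈ D, T.Adj u v → ∃ H, IsHalfArena T D v u H k := fun u hu huv => by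
      obtain ⟨X, hX⟩ := ih (hwin u hu huv)
      exact (hX.exists_isArenaOfDepth_or_isHalfArena hT hvD huv).resolve_left hD
    choose! Y hY using hY
    exact ⟨_, isArenaOfDepth_glue hT hvD hY⟩

end Glue

lemma attackerWinsIn_of_gameValue_eq {V : Type*} [DecidableEq V] {G : SimpleGraph V}
    {D : Finset V} {t : ℕ} (h : gameValue G D = t) : AttackerWinsIn G t D := by
  have hne : {n : ℕ∞ | ∃ t : ℕ, n = t ∧ AttackerWinsIn G t D}.Nonempty := by
    by_contra hne
    rw [Set.not_nonempty_iff_eq_empty] at hne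
    rw [gameValue, hne, sInf_empty] at h
    exact ENat.top_ne_natCast t h
  obtain ⟨s, hs, hwin⟩ := csInf_mem hne
  rw [← gameValue, h, Nat.cast_inj] at hs
  exact hs ▸ hwin

/-- If `t_T(D) = t < +∞`, then `(T, D)` has an arena `X` with `ctd(X) ≤ t`. -/
theorem stmt9 {V : Type*} [Fintype V] [DecidableEq V] (T : SimpleGraph V)
    [DecidableRel T.Adj] (hT : T.IsTree) (D : Finset V) (t : ℕ)
    (h : gameValue T D = (t : ℕ∞)) :
    ∃ X : Finset V, IsArena T D X ∧ ctd T D X ≤ t := by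
  obtain ⟨X, hX⟩ := exists_isArenaOfDepth_of_attackerWinsIn hT.isAcyclic
    (attackerWinsIn_of_gameValue_eq h)
  exact ⟨X, hX.isArena, hX.ctd_le⟩
end

section
/- If T is a tree on n vertices and D is a set of guards, then either t_T(D) = +∞ or t_T(D) = O(log n); more precisely, if t_T(D) < +∞ then t_T(D) ≤ ⌈log₂(n + 1)⌉. -/
set_option linter.unusedSectionVars false
set_option maxHeartbeats 1000000

namespace MobileDom
open SimpleGraph


lemma aw_mono {V : Type*} [DecidableEq V] (G : SimpleGraph V) :
    ∀ t t' (D : Finset V), t ≤ t' → AttackerWinsIn G t D → AttackerWinsIn G t' D := by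
  intro t
  induction t with
  | zero => intro t' D _ h; exact h.elim
  | succ s ih =>
    intro t' D hle h
    obtain ⟨v, hv, hr⟩ := h
    cases t' with
    | zero => omega
    | succ s' => exact ⟨v, hv, fun u hu ha => ih s' _ (by omega) (hr u hu ha)⟩

lemma clog_two_double {k : ℕ} (hk : 1 ≤ k) :
    Nat.clog 2 (2 * k) = Nat.clog 2 k + 1 := by
  apply Nat.le_antisymm
  · rw [Nat.clog_le_iff_le_pow (by norm_num)]
    have := Nat.le_pow_clog (b := 2) (by norm_num) k
    rw [pow_succ]
    omega
  · rcases h : Nat.clog 2 (2 * k) with _ | d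
    · exfalso
      have : 2 * k ≤ 2 ^ 0 := by
        rw [← Nat.clog_le_iff_le_pow (by norm_num), h]
      omega
    · have h2 : 2 * k ≤ 2 ^ (d + 1) := by
        rw [← Nat.clog_le_iff_le_pow (by norm_num), h]
      have : k ≤ 2 ^ d := by rw [pow_succ] at h2; omega
      have := (Nat.clog_le_iff_le_pow (by norm_num) (x := k) (y := d)).mpr this
      omega

lemma ar_lemma {m k : ℕ} (hm : 2 ≤ m) (hmk : m ≤ k) :
    2 * ((m + 1) / 2) ≤ 2 ^ (Nat.clog 2 k) := by
  have hk : k ≤ 2 ^ Nat.clog 2 k := Nat.le_pow_clog (by norm_num) k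
  rcases Nat.even_or_odd m with ⟨t, ht⟩ | ⟨t, ht⟩
  · omega
  · -- m odd : 2*((m+1)/2) = m+1
    have hgoal : 2 * ((m + 1) / 2) = m + 1 := by omega
    rcases Nat.lt_or_ge m k with hlt | hge
    · omega
    · have hkm : k = m := by omega
      subst hkm
      -- k odd, k ≥ 2, so k < 2 ^ clog 2 k
      have hc : 0 < Nat.clog 2 k := Nat.clog_pos (by norm_num) (by omega)
      have : 2 ^ Nat.clog 2 k = 2 * 2 ^ (Nat.clog 2 k - 1) := by
        rw [← pow_succ']
        congr 1
        omega
      omega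

lemma sum_eq_card_forces_one {α : Type*} {s : Finset α} {f : α → ℕ}
    (hsum : ∑ i ∈ s, f i = s.card) (hge : ∀ i ∈ s, 1 ≤ f i) :
    ∀ i ∈ s, f i = 1 := by
  intro i hi
  by_contra hne
  have h2 : 2 ≤ f i := by have := hge i hi; omega
  have : ∑ j ∈ s, (1 : ℕ) < ∑ j ∈ s, f j :=
    Finset.sum_lt_sum hge ⟨i, hi, by omega⟩
  simp at this
  omega


section Walks
variable {V : Type*} [DecidableEq V]
lemma support_mapLe {G G' : SimpleGraph V} (h : G ≤ G') {u v : V} (p : G.Walk u v) :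
    (p.mapLe h).support = p.support := by
  induction p with
  | nil => rfl
  | cons ha q ih =>
    unfold SimpleGraph.Walk.mapLe at *
    rw [SimpleGraph.Walk.map_cons, SimpleGraph.Walk.support_cons,
      SimpleGraph.Walk.support_cons, ih]

lemma isPath_mapLe {G G' : SimpleGraph V} (h : G ≤ G') {u v : V} {p : G.Walk u v}
    (hp : p.IsPath) : (p.mapLe h).IsPath := by
  rw [SimpleGraph.Walk.isPath_def, support_mapLe]
  exact (SimpleGraph.Walk.isPath_def p).mp hp

/-- THE workhorse: in an acyclic graph there cannot be two walks to `y`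
from two distinct neighbours `z₁ z₂` of `u`, both avoiding `u`. -/
lemma lemtwo {F : SimpleGraph V} (hF : F.IsAcyclic) {u z₁ z₂ y : V}
    (h1 : F.Adj u z₁) (h2 : F.Adj u z₂) (hne : z₁ ≠ z₂)
    (q₁ : F.Walk z₁ y) (hq₁ : u ∉ q₁.support)
    (q₂ : F.Walk z₂ y) (hq₂ : u ∉ q₂.support) : False := by
  have t1 := q₁.toPath
  have t2 := q₂.toPath
  have ht1 : u ∉ (↑q₁.toPath : F.Walk z₁ y).support :=
    fun hmem => hq₁ (SimpleGraph.Walk.support_toPath_subset q₁ hmem)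
  have ht2 : u ∉ (↑q₂.toPath : F.Walk z₂ y).support :=
    fun hmem => hq₂ (SimpleGraph.Walk.support_toPath_subset q₂ hmem)
  have p1 : F.Walk u y := SimpleGraph.Walk.cons h1 ↑q₁.toPath
  have hp1 : (SimpleGraph.Walk.cons h1 (↑q₁.toPath : F.Walk z₁ y)).IsPath :=
    (SimpleGraph.Walk.cons_isPath_iff _ _).mpr ⟨q₁.toPath.2, ht1⟩
  have hp2 : (SimpleGraph.Walk.cons h2 (↑q₂.toPath : F.Walk z₂ y)).IsPath :=
    (SimpleGraph.Walk.cons_isPath_iff _ _).mpr ⟨q₂.toPath.2, ht2⟩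
  have := SimpleGraph.isAcyclic_iff_path_unique.mp hF ⟨_, hp1⟩ ⟨_, hp2⟩
  have hval : SimpleGraph.Walk.cons h1 (↑q₁.toPath : F.Walk z₁ y)
      = SimpleGraph.Walk.cons h2 (↑q₂.toPath : F.Walk z₂ y) := congrArg Subtype.val this
  have : (SimpleGraph.Walk.cons h1 (↑q₁.toPath : F.Walk z₁ y)).getVert 1
      = (SimpleGraph.Walk.cons h2 (↑q₂.toPath : F.Walk z₂ y)).getVert 1 := by rw [hval]
  rw [SimpleGraph.Walk.getVert_cons_succ, SimpleGraph.Walk.getVert_cons_succ,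
    SimpleGraph.Walk.getVert_zero, SimpleGraph.Walk.getVert_zero] at this
  exact hne this

/-- reachability avoiding a vertex -/
def DReach (S : SimpleGraph V) (x u w : V) : Prop :=
  ∃ p : S.Walk u w, x ∉ p.support

lemma DReach.refl {S : SimpleGraph V} {x u : V} (h : u ≠ x) : DReach S x u u :=
  ⟨SimpleGraph.Walk.nil, by simp [Ne.symm h]⟩

lemma DReach.ne_end {S : SimpleGraph V} {x u w : V} (h : DReach S x u w) : w ≠ x := by
  obtain ⟨p, hp⟩ := h
  exact fun he => hp (he ▸ p.end_mem_support)

lemma DReach.ne_start {S : SimpleGraph V} {x u w : V} (h : DReach S x u w) : u ≠ x := by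
  obtain ⟨p, hp⟩ := h
  exact fun he => hp (he ▸ p.start_mem_support)

lemma DReach.step {S : SimpleGraph V} {x u w z : V} (h : DReach S x u w)
    (hadj : S.Adj w z) (hz : z ≠ x) : DReach S x u z := by
  obtain ⟨p, hp⟩ := h
  refine ⟨p.append (SimpleGraph.Walk.cons hadj SimpleGraph.Walk.nil), ?_⟩
  rw [SimpleGraph.Walk.support_append]
  intro hmem
  rcases List.mem_append.mp hmem with h1 | h2
  · exact hp h1
  · have hx := List.mem_of_mem_tail h2
    rw [SimpleGraph.Walk.support_cons] at hx
    rcases List.mem_cons.mp hx with h3 | h4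
    · exact (DReach.ne_end ⟨p, hp⟩) h3.symm
    · simp only [SimpleGraph.Walk.support_nil, List.mem_singleton] at h4
      exact hz h4.symm

-- parent machinery
noncomputable def par (S : SimpleGraph V) (r w : V) : V :=
  @dite _ (S.Reachable w r ∧ w ≠ r) (Classical.dec _)
    (fun h => ((Classical.choice h.1 : S.Walk w r).toPath : S.Walk w r).support.getD 1 w)
    (fun _ => w)

lemma pard (S : SimpleGraph V) (r w : V) (hre : S.Reachable w r) (hw : w ≠ r) :
    ∃ (a : V) (_ : S.Adj w a) (q : S.Walk a r),
      par S r w = a ∧ q.IsPath ∧ w ∉ q.support := by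
  have hpath : ((Classical.choice hre : S.Walk w r).toPath : S.Walk w r).IsPath :=
    (Classical.choice hre : S.Walk w r).toPath.2
  obtain ⟨a, had, q, hPeq⟩ :=
    Walk.not_nil_iff.mp
      (Walk.not_nil_of_ne (p := ((Classical.choice hre : S.Walk w r).toPath : S.Walk w r)) hw)
  refine ⟨a, had, q, ?_, ?_, ?_⟩
  · have hpv : par S r w
        = ((Classical.choice hre : S.Walk w r).toPath : S.Walk w r).support.getD 1 w := by
      unfold par
      rw [dif_pos (⟨hre, hw⟩ : S.Reachable w r ∧ w ≠ r)]
    rw [hpv, hPeq, Walk.support_cons, Walk.support_eq_cons q]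
    rfl
  · rw [hPeq] at hpath
    exact ((Walk.cons_isPath_iff _ _).mp hpath).1
  · rw [hPeq] at hpath
    exact ((Walk.cons_isPath_iff _ _).mp hpath).2

lemma flip {S F : SimpleGraph V} (hSF : S ≤ F) (hF : F.IsAcyclic) {r w z : V}
    (hre : S.Reachable w r) (hw : w ≠ r) (hzw : S.Adj w z) (hz : z ≠ par S r w) :
    par S r z = w ∧ z ≠ r ∧ S.Reachable z r := by
  obtain ⟨a, had, q, hpar, hqpath, hwq⟩ := pard S r w hre hw
  rw [hpar] at hz
  -- z ∉ q.support
  have hzq : z ∉ q.support := by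
    intro hmem
    have t' := q.takeUntil z hmem
    have ht'sub := Walk.support_takeUntil_subset q hmem
    exact lemtwo hF (hSF had) (hSF hzw) (Ne.symm hz)
      ((q.takeUntil z hmem).mapLe hSF)
      (by rw [support_mapLe]; exact fun hm => hwq (ht'sub hm))
      (Walk.nil' z) (by simp [Walk.support_nil]; exact (Adj.ne hzw).symm ∘ Eq.symm)
  -- build the new path
  have hP'path : (Walk.cons had q).IsPath := (Walk.cons_isPath_iff _ _).mpr ⟨hqpath, hwq⟩
  have hzP' : z ∉ (Walk.cons had q).support := by
    rw [Walk.support_cons]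
    intro hm
    rcases List.mem_cons.mp hm with h1 | h2
    · exact (Adj.ne hzw) h1.symm
    · exact hzq h2
  have hQpath : (Walk.cons hzw.symm (Walk.cons had q)).IsPath :=
    (Walk.cons_isPath_iff _ _).mpr ⟨hP'path, hzP'⟩
  have hzr : z ≠ r := by
    intro he
    exact hzP' (he ▸ (Walk.cons had q).end_mem_support)
  have hreZ : S.Reachable z r := ⟨Walk.cons hzw.symm (Walk.cons had q)⟩
  refine ⟨?_, hzr, hreZ⟩
  obtain ⟨b, hbd, q2, hpar2, hq2path, hq2sup⟩ := pard S r z hreZ hzr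
  -- two F-paths z → r : cons hbd q2 and cons hzw.symm (cons had q); unique
  have hp1 : ((Walk.cons hbd q2).mapLe hSF).IsPath :=
    isPath_mapLe hSF ((Walk.cons_isPath_iff _ _).mpr ⟨hq2path, hq2sup⟩)
  have hp2 : ((Walk.cons hzw.symm (Walk.cons had q)).mapLe hSF).IsPath :=
    isPath_mapLe hSF hQpath
  have huniq := SimpleGraph.isAcyclic_iff_path_unique.mp hF ⟨_, hp1⟩ ⟨_, hp2⟩
  have hval : ((Walk.cons hbd q2).mapLe hSF) = ((Walk.cons hzw.symm (Walk.cons had q)).mapLe hSF) :=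
    congrArg Subtype.val huniq
  have := congrArg (fun (p : F.Walk z r) => p.getVert 1) hval
  unfold SimpleGraph.Walk.mapLe at this
  simp only [Walk.map_cons, Walk.getVert_cons_succ, Walk.getVert_zero] at this
  rw [hpar2]
  exact this


end Walks

section Game
open Finset
variable {V : Type*} [Fintype V] [DecidableEq V]
def gN (G : SimpleGraph V) [DecidableRel G.Adj] (D X : Finset V) : Finset V :=
  D.filter (fun u => ∃ y ∈ X, G.Adj u y)

def Violator (G : SimpleGraph V) [DecidableRel G.Adj] (D X : Finset V) : Prop :=
  (∀ y ∈ X, y ∉ D) ∧ (gN G D X).card < X.card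

variable (F : SimpleGraph V) [DecidableRel F.Adj] (D Y : Finset V)

/-- the bipartite graph between a violator and its guard neighbours -/
def sg : SimpleGraph V where
  Adj a b := F.Adj a b ∧ ((a ∈ Y ∧ b ∈ gN F D Y) ∨ (a ∈ gN F D Y ∧ b ∈ Y))
  symm := by
    constructor
    rintro a b ⟨h1, h2 | h2⟩
    · exact ⟨h1.symm, Or.inr ⟨h2.2, h2.1⟩⟩
    · exact ⟨h1.symm, Or.inl ⟨h2.2, h2.1⟩⟩
  loopless := ⟨fun a ha => F.loopless.irrefl a ha.1⟩

lemma sg_le : sg F D Y ≤ F := fun _ _ h => h.1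

variable {F D Y}

lemma gN_subset : gN F D Y ⊆ D := Finset.filter_subset _ _

lemma gN_mono {Z : Finset V} (h : Z ⊆ Y) : gN F D Z ⊆ gN F D Y := by
  intro u hu
  rw [gN, Finset.mem_filter] at hu ⊢
  obtain ⟨h1, y, hy, h2⟩ := hu
  exact ⟨h1, y, h hy, h2⟩

section Structure
variable (hviol : Violator F D Y)
  (hmin : ∀ Z ⊆ Y, Z ≠ Y → ¬ Violator F D Z)

include hviol

lemma Y_nonempty : Y.Nonempty := by
  have := hviol.2
  rw [← Finset.card_pos]
  omega

lemma Y_disj_gN : ∀ {y}, y ∈ Y → y ∉ gN F D Y :=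
  fun hy hg => hviol.1 _ hy (gN_subset hg)

include hmin

lemma gN_card : (gN F D Y).card = Y.card - 1 := by
  obtain ⟨y, hy⟩ := Y_nonempty hviol
  have h1 : (gN F D Y).card < Y.card := hviol.2
  have h2 : ¬ Violator F D (Y.erase y) :=
    hmin _ (Finset.erase_subset _ _) (fun he => by
      have := Finset.erase_ssubset hy
      rw [he] at this
      exact (lt_irrefl _ this))
  rw [Violator] at h2
  push_neg at h2
  have h3 := h2 (fun z hz => hviol.1 z (Finset.mem_of_mem_erase hz))
  have h4 : (gN F D (Y.erase y)).card ≤ (gN F D Y).card :=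
    Finset.card_le_card (gN_mono (Finset.erase_subset _ _))
  have h5 : (Y.erase y).card = Y.card - 1 := Finset.card_erase_of_mem hy
  have : 0 < Y.card := Finset.card_pos.mpr ⟨y, hy⟩
  omega

lemma noLeaf (hm : 2 ≤ Y.card) :
    ∀ g ∈ gN F D Y, ∃ y₁ ∈ Y, ∃ y₂ ∈ Y, y₁ ≠ y₂ ∧ F.Adj g y₁ ∧ F.Adj g y₂ := by
  intro g hg
  obtain ⟨hgD, y₁, hy₁, hadj₁⟩ := Finset.mem_filter.mp hg
  refine ⟨y₁, hy₁, ?_⟩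
  by_contra hno
  push_neg at hno
  have honly : ∀ y ∈ Y, F.Adj g y → y = y₁ := by
    intro y hy hadj
    by_contra hne
    exact hno y hy (fun h => hne h.symm) hadj₁ hadj
  have hsub : gN F D (Y.erase y₁) ⊆ (gN F D Y).erase g := by
    intro w hw
    obtain ⟨hwD, y, hy, hadj⟩ := Finset.mem_filter.mp hw
    refine Finset.mem_erase.mpr ⟨?_, gN_mono (Finset.erase_subset _ _) hw⟩
    intro he
    subst he
    exact (Finset.mem_erase.mp hy).1 (honly y (Finset.mem_of_mem_erase hy) hadj)
  have hviolZ : Violator F D (Y.erase y₁) := by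
    constructor
    · exact fun z hz => hviol.1 z (Finset.mem_of_mem_erase hz)
    · have h1 := Finset.card_le_card hsub
      have h2 : ((gN F D Y).erase g).card = (gN F D Y).card - 1 :=
        Finset.card_erase_of_mem hg
      have h3 := gN_card hviol hmin
      have h4 : (Y.erase y₁).card = Y.card - 1 := Finset.card_erase_of_mem hy₁
      omega
  exact hmin _ (Finset.erase_subset _ _)
    (fun he => by
      have := Finset.erase_ssubset hy₁
      rw [he] at this
      exact lt_irrefl _ this) hviolZ

lemma sg_connected {y₀ : V} (hy₀ : y₀ ∈ Y) :
    ∀ y ∈ Y, (sg F D Y).Reachable y₀ y := by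
  classical
  by_contra hno
  push_neg at hno
  obtain ⟨y₂, hy₂Y, hy₂⟩ := hno
  set R := Y.filter (fun y => (sg F D Y).Reachable y₀ y) with hR
  have hy₀R : y₀ ∈ R := Finset.mem_filter.mpr ⟨hy₀, Reachable.refl _⟩
  have hy₂R : y₂ ∈ Y \ R := by
    rw [Finset.mem_sdiff]
    exact ⟨hy₂Y, fun h => hy₂ (Finset.mem_filter.mp h).2⟩
  -- both proper nonempty subsets of Y satisfy Hall
  have hR_sub : R ⊆ Y := Finset.filter_subset _ _
  have hRd_sub : Y \ R ⊆ Y := Finset.sdiff_subset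
  have hR_ne : R ≠ Y := fun h => (Finset.mem_sdiff.mp hy₂R).2 (h ▸ hy₂Y)
  have hRd_ne : Y \ R ≠ Y := fun h => by
    have hmem : y₀ ∈ Y \ R := by rw [h]; exact hy₀
    exact (Finset.mem_sdiff.mp hmem).2 hy₀R
  have hH1 : R.card ≤ (gN F D R).card := by
    have := hmin R hR_sub hR_ne
    rw [Violator] at this
    push_neg at this
    exact this (fun z hz => hviol.1 z (hR_sub hz))
  have hH2 : (Y \ R).card ≤ (gN F D (Y \ R)).card := by
    have := hmin _ hRd_sub hRd_ne
    rw [Violator] at this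
    push_neg at this
    exact this (fun z hz => hviol.1 z (hRd_sub hz))
  have hdisj : Disjoint (gN F D R) (gN F D (Y \ R)) := by
    rw [Finset.disjoint_left]
    intro g hg1 hg2
    obtain ⟨hgD, ya, hya, hadja⟩ := Finset.mem_filter.mp hg1
    obtain ⟨_, yb, hyb, hadjb⟩ := Finset.mem_filter.mp hg2
    have hgN : g ∈ gN F D Y := gN_mono hR_sub hg1
    have hadjSa : (sg F D Y).Adj ya g := ⟨hadja.symm, Or.inl ⟨hR_sub hya, hgN⟩⟩
    have hadjSb : (sg F D Y).Adj g yb := ⟨hadjb, Or.inr ⟨hgN, hRd_sub hyb⟩⟩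
    have hra : (sg F D Y).Reachable y₀ ya := (Finset.mem_filter.mp hya).2
    have : (sg F D Y).Reachable y₀ yb :=
      (hra.trans hadjSa.reachable).trans hadjSb.reachable
    exact (Finset.mem_sdiff.mp hyb).2 (Finset.mem_filter.mpr ⟨hRd_sub hyb, this⟩)
  have hunion : gN F D R ∪ gN F D (Y \ R) ⊆ gN F D Y := by
    intro g hg
    rcases Finset.mem_union.mp hg with h | h
    · exact gN_mono hR_sub h
    · exact gN_mono hRd_sub h
  have hcard_union : (gN F D R).card + (gN F D (Y \ R)).card ≤ (gN F D Y).card := by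
    rw [← Finset.card_union_of_disjoint hdisj]
    exact Finset.card_le_card hunion
  have hcardY : R.card + (Y \ R).card = Y.card := by
    rw [Finset.card_sdiff_of_subset hR_sub]
    have := Finset.card_le_card hR_sub
    omega
  have := gN_card hviol hmin
  have hYpos : 0 < Y.card := Finset.card_pos.mpr ⟨y₀, hy₀⟩
  omega

end Structure
/-- matching ⇒ defender survives -/
lemma survival (G : SimpleGraph V) :
    ∀ t (D : Finset V) (f : V → V),
      (∀ v, v ∉ D → f v ∈ D ∧ G.Adj (f v) v) →
      (∀ v w, v ∉ D → w ∉ D → f v = f w → v = w) →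
      ¬ AttackerWinsIn G t D := by
  intro t
  induction t with
  | zero => intro D f _ _ h; exact h
  | succ s ih =>
    rintro D f hf1 hf2 ⟨v, hv, hr⟩
    obtain ⟨hfD, hfadj⟩ := hf1 v hv
    have haw := hr (f v) hfD hfadj
    set D' := insert v (D.erase (f v)) with hD'
    apply ih D' (fun y => if y = f v then v else f y) ?_ ?_ haw
    · intro y hy
      have hyv : y ≠ v := fun h => hy (h ▸ mem_insert_self v _)
      by_cases hyfv : y = f v
      · subst hyfv
        simp only [if_pos rfl]
        exact ⟨mem_insert_self v _, hfadj.symm⟩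
      · have hyD : y ∉ D := by
          intro hyD
          exact hy (mem_insert_of_mem (mem_erase.mpr ⟨hyfv, hyD⟩))
        obtain ⟨h1, h2⟩ := hf1 y hyD
        have : f y ≠ f v := fun h => hyv (hf2 y v hyD hv h)
        simp only [if_neg hyfv]
        exact ⟨mem_insert_of_mem (mem_erase.mpr ⟨this, h1⟩), h2⟩
    · intro y w hy hw heq
      have hyD' : y ∉ D' := hy
      have hyv : y ≠ v := fun h => hy (h ▸ mem_insert_self v _)
      have hwv : w ≠ v := fun h => hw (h ▸ mem_insert_self v _)
      have hyD : y = f v ∨ y ∉ D := by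
        by_cases h : y = f v
        · exact Or.inl h
        · exact Or.inr (fun hyD => hy (mem_insert_of_mem (mem_erase.mpr ⟨h, hyD⟩)))
      have hwD : w = f v ∨ w ∉ D := by
        by_cases h : w = f v
        · exact Or.inl h
        · exact Or.inr (fun hwD => hw (mem_insert_of_mem (mem_erase.mpr ⟨h, hwD⟩)))
      by_cases h1 : y = f v <;> by_cases h2 : w = f v
      · rw [h1, h2]
      · rw [if_pos h1, if_neg h2] at heq
        rcases hwD with h | hwD; · exact absurd h h2
        exfalso
        exact hv ((heq ▸ (hf1 w hwD).1 : v ∈ D))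
      · rw [if_neg h1, if_pos h2] at heq
        rcases hyD with h | hyD; · exact absurd h h1
        exfalso
        exact hv ((heq.symm ▸ (hf1 y hyD).1 : v ∈ D))
      · rw [if_neg h1, if_neg h2] at heq
        rcases hyD with h | hyD; · exact absurd h h1
        rcases hwD with h | hwD; · exact absurd h h2
        exact hf2 y w hyD hwD heq

/-- If attacker can win at all, a violator exists. -/
lemma violator_of_win (G : SimpleGraph V) [DecidableRel G.Adj] {t : ℕ} {D : Finset V}
    (h : AttackerWinsIn G t D) : ∃ X : Finset V, Violator G D X := by
  by_contra hno
  push_neg at hno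
  -- Hall condition holds
  have hall : ∀ s : Finset {x : V // x ∉ D},
      s.card ≤ (s.biUnion (fun x => D.filter (fun u => G.Adj u ↑x))).card := by
    intro s
    set X : Finset V := s.image Subtype.val with hX
    have hcard : X.card = s.card := card_image_of_injective s Subtype.val_injective
    have hXD : ∀ y ∈ X, y ∉ D := by
      intro y hy
      obtain ⟨⟨x, hx⟩, _, rfl⟩ := mem_image.mp hy
      exact hx
    have := hno X
    unfold Violator at this
    push_neg at this
    have hge : X.card ≤ (gN G D X).card := this hXD
    have hEq : gN G D X = s.biUnion (fun x => D.filter (fun u => G.Adj u ↑x)) := by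
      ext u
      rw [mem_biUnion]
      unfold gN
      rw [mem_filter]
      constructor
      · rintro ⟨hu, y, hy, hadj⟩
        obtain ⟨x, hxs, rfl⟩ := mem_image.mp hy
        refine ⟨x, hxs, mem_filter.mpr ⟨hu, hadj⟩⟩
      · rintro ⟨x, hxs, hmem⟩
        rw [mem_filter] at hmem
        exact ⟨hmem.1, ↑x, mem_image.mpr ⟨x, hxs, rfl⟩, hmem.2⟩
    rw [hEq] at hge
    omega
  obtain ⟨f, hinj, hmem⟩ :=
    (Finset.all_card_le_biUnion_card_iff_exists_injective
      (fun x : {x : V // x ∉ D} => D.filter (fun u => G.Adj u ↑x))).mp hall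
  classical
  apply survival G t D (fun v => if h : v ∉ D then f ⟨v, h⟩ else v) ?_ ?_ h
  · intro v hv
    simp only [dif_pos hv]
    have := hmem ⟨v, hv⟩
    rw [mem_filter] at this
    exact ⟨this.1, this.2⟩
  · intro v w hv hw heq
    simp only [dif_pos hv, dif_pos hw] at heq
    have := hinj heq
    exact congrArg Subtype.val this


end Game

section Structure2
open Finset
variable {V : Type*} [Fintype V] [DecidableEq V]
variable {F : SimpleGraph V} [DecidableRel F.Adj] {D Y : Finset V}

lemma fiber_card_one (hF : F.IsAcyclic) (hviol : Violator F D Y)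
    (hmin : ∀ Z ⊆ Y, Z ≠ Y → ¬ Violator F D Z) (hm : 2 ≤ Y.card)
    {y₀ : V} (hy₀ : y₀ ∈ Y) :
    ∀ g ∈ gN F D Y,
      ((Y.erase y₀).filter (fun y => par (sg F D Y) y₀ y = g)).card = 1 := by
  classical
  set S := sg F D Y with hS
  have hSF : S ≤ F := sg_le F D Y
  have hconn := sg_connected hviol hmin hy₀
  have hmap : ∀ y ∈ Y.erase y₀, par S y₀ y ∈ gN F D Y := by
    intro y hy
    obtain ⟨hyne, hyY⟩ := Finset.mem_erase.mp hy
    obtain ⟨a, hadj, q, hpar, _, _⟩ := pard S y₀ y ((hconn y hyY).symm) hyne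
    rw [hpar]
    rcases hadj.2 with ⟨_, h⟩ | ⟨h, _⟩
    · exact h
    · exact absurd h (Y_disj_gN hviol hyY)
  have hsum := Finset.card_eq_sum_card_fiberwise hmap
  have hcards : (Y.erase y₀).card = Y.card - 1 := Finset.card_erase_of_mem hy₀
  have hgcard := gN_card hviol hmin
  have hone : ∀ g ∈ gN F D Y,
      1 ≤ ((Y.erase y₀).filter (fun y => par S y₀ y = g)).card := by
    intro g hg
    obtain ⟨y₁, hy₁, y₂, hy₂, hne, hadj₁, hadj₂⟩ := noLeaf hviol hmin hm g hg
    have hSadj₁ : S.Adj g y₁ := ⟨hadj₁, Or.inr ⟨hg, hy₁⟩⟩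
    have hSadj₂ : S.Adj g y₂ := ⟨hadj₂, Or.inr ⟨hg, hy₂⟩⟩
    have hgy₀ : g ≠ y₀ := fun he => hviol.1 y₀ hy₀ (he ▸ gN_subset hg)
    have hre : S.Reachable g y₀ := hSadj₁.reachable.trans (hconn y₁ hy₁).symm
    set z := if y₁ = par S y₀ g then y₂ else y₁ with hz
    have hzadj : S.Adj g z := by
      rw [hz]; split <;> assumption
    have hzpar : z ≠ par S y₀ g := by
      rw [hz]; split
      · rename_i h; exact fun he => hne (h.trans he.symm)
      · rename_i h; exact h
    have hzY : z ∈ Y := by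
      rw [hz]; split <;> assumption
    obtain ⟨hparz, hzy₀, _⟩ := flip hSF hF hre hgy₀ hzadj hzpar
    refine Finset.card_pos.mpr ⟨z, Finset.mem_filter.mpr ⟨Finset.mem_erase.mpr ⟨hzy₀, hzY⟩, hparz⟩⟩
  refine sum_eq_card_forces_one ?_ hone
  rw [← hsum, hcards, hgcard]

lemma nbrs_two (hF : F.IsAcyclic) (hviol : Violator F D Y)
    (hmin : ∀ Z ⊆ Y, Z ≠ Y → ¬ Violator F D Z) (hm : 2 ≤ Y.card)
    {y₀ : V} (hy₀ : y₀ ∈ Y) :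
    ∀ v ∉ Y, ∀ w₁ w₂ w₃, (sg F D Y).Adj v w₁ → (sg F D Y).Adj v w₂ →
      (sg F D Y).Adj v w₃ → (w₁ = w₂ ∨ w₁ = w₃ ∨ w₂ = w₃) := by
  classical
  set S := sg F D Y with hS
  have hSF : S ≤ F := sg_le F D Y
  have hconn := sg_connected hviol hmin hy₀
  intro v hv w₁ w₂ w₃ h1 h2 h3
  by_cases hvg : v ∈ gN F D Y
  · obtain ⟨c, hc⟩ := Finset.card_eq_one.mp (fiber_card_one hF hviol hmin hm hy₀ v hvg)
    have hvy₀ : v ≠ y₀ := fun he => hviol.1 y₀ hy₀ (he ▸ gN_subset hvg)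
    have hkey : ∀ w, S.Adj v w → w = par S y₀ v ∨ w = c := by
      intro w hw
      by_cases hwp : w = par S y₀ v
      · exact Or.inl hwp
      · have hwY : w ∈ Y := by
          rcases hw.2 with ⟨h, _⟩ | ⟨_, h⟩
          · exact absurd h hv
          · exact h
        have hre : S.Reachable v y₀ := hw.reachable.trans (hconn w hwY).symm
        obtain ⟨hparw, hwy₀, _⟩ := flip hSF hF hre hvy₀ hw hwp
        have : w ∈ (Y.erase y₀).filter (fun y => par S y₀ y = v) :=
          Finset.mem_filter.mpr ⟨Finset.mem_erase.mpr ⟨hwy₀, hwY⟩, hparw⟩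
        rw [hc] at this
        exact Or.inr (Finset.mem_singleton.mp this)
    rcases hkey w₁ h1 with ha | ha <;> rcases hkey w₂ h2 with hb | hb <;>
      rcases hkey w₃ h3 with hcc | hcc <;> simp [ha, hb, hcc]
  · rcases h1.2 with ⟨h, _⟩ | ⟨h, _⟩
    · exact absurd h hv
    · exact absurd h hvg

end Structure2

section Centroid
open Finset
variable {V : Type*} [Fintype V] [DecidableEq V]

lemma centroid {S F : SimpleGraph V} (hSF : S ≤ F) (hF : F.IsAcyclic) {Y : Finset V}
    (hbip1 : ∀ a b, S.Adj a b → a ∈ Y → b ∉ Y)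
    (hbip2 : ∀ a b, S.Adj a b → a ∉ Y → b ∈ Y)
    (hdeg2 : ∀ v ∉ Y, ∀ w₁ w₂ w₃, S.Adj v w₁ → S.Adj v w₂ → S.Adj v w₃ →
      (w₁ = w₂ ∨ w₁ = w₃ ∨ w₂ = w₃))
    (hYne : Y.Nonempty) :
    ∃ x₀ ∈ Y, ∀ u, S.Adj x₀ u → ∀ X' : Finset V,
      (∀ w, w ∈ X' ↔ w ∈ Y ∧ DReach S x₀ u w) → 2 * X'.card ≤ Y.card + 1 := by
  classical
  set m := Y.card with hm
  set wt : V → V → ℕ := fun x u => (Y.filter (fun w => DReach S x u w)).card with hwt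
  set f : V → ℕ := fun x => (Finset.univ.filter (fun u => S.Adj x u)).sup (wt x) with hf
  obtain ⟨x₀, hx₀Y, hx₀min⟩ := Finset.exists_min_image Y f hYne
  refine ⟨x₀, hx₀Y, ?_⟩
  intro u hadj X' hX'
  have hX'eq : X' = Y.filter (fun w => DReach S x₀ u w) :=
    Finset.ext (fun w => by rw [hX' w, Finset.mem_filter])
  rw [hX'eq]
  change 2 * wt x₀ u ≤ m + 1
  by_contra hbig
  push_neg at hbig
  set W := wt x₀ u with hW
  have hWm : W ≤ m := Finset.card_le_card (Finset.filter_subset _ _)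
  have hbig' : m + 2 ≤ 2 * W := hbig
  have hWpos : 0 < W := by omega
  have huY : u ∉ Y := hbip1 x₀ u hadj hx₀Y
  -- find y₁ : the S-neighbour of u other than x₀
  obtain ⟨ystar, hystar⟩ := Finset.card_pos.mp hWpos
  obtain ⟨hystarY, pstar, hpstar⟩ := Finset.mem_filter.mp hystar
  have hune : u ≠ ystar := fun he => huY (he ▸ hystarY)
  obtain ⟨y₁, hadj_uy₁, q, hpeq⟩ := SimpleGraph.Walk.not_nil_iff.mp
    (SimpleGraph.Walk.not_nil_of_ne (p := pstar) hune)
  have hy₁x₀ : y₁ ≠ x₀ := by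
    intro he
    apply hpstar
    rw [hpeq, SimpleGraph.Walk.support_cons]
    exact List.mem_cons_of_mem _ (he ▸ q.start_mem_support)
  have hy₁Y : y₁ ∈ Y := hbip2 u y₁ hadj_uy₁ huY
  have hx₀u : x₀ ≠ u := (SimpleGraph.Adj.ne hadj)
  have huy₁ : u ≠ y₁ := (SimpleGraph.Adj.ne hadj_uy₁)
  have uNbrs : ∀ z, S.Adj u z → z = x₀ ∨ z = y₁ := by
    intro z hz
    rcases hdeg2 u huY z x₀ y₁ hz hadj.symm hadj_uy₁ with h | h | h
    · exact Or.inl h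
    · exact Or.inr h
    · exact absurd h.symm hy₁x₀
  have hbound : ∀ u', S.Adj y₁ u' → wt y₁ u' + 1 ≤ W := by
    intro u' hadj'
    by_cases hu'u : u' = u
    · subst hu'u
      have hsub : Y.filter (fun w => DReach S y₁ u' w)
          ⊆ Y \ (Y.filter (fun w => DReach S x₀ u' w)) := by
        intro y hy
        obtain ⟨hyY, hdr2⟩ := Finset.mem_filter.mp hy
        rw [Finset.mem_sdiff]
        refine ⟨hyY, fun hyW => ?_⟩
        have hdr1 := (Finset.mem_filter.mp hyW).2
        have hyu : u' ≠ y := fun he => huY (he ▸ hyY)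
        -- path avoiding x₀, second vertex must be y₁
        obtain ⟨w₁, hw₁⟩ := hdr1
        have hx₀w : x₀ ∉ (↑w₁.toPath : S.Walk u' y).support :=
          fun hmem => hw₁ (SimpleGraph.Walk.support_toPath_subset w₁ hmem)
        obtain ⟨z₁, ha₁, r₁, heq₁⟩ := SimpleGraph.Walk.not_nil_iff.mp
          (SimpleGraph.Walk.not_nil_of_ne (p := (↑w₁.toPath : S.Walk u' y)) hyu)
        have hz₁ : z₁ = y₁ := by
          rcases uNbrs z₁ ha₁ with h | h
          · exfalso
            apply hx₀w
            rw [heq₁, SimpleGraph.Walk.support_cons]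
            exact List.mem_cons_of_mem _ (h ▸ r₁.start_mem_support)
          · exact h
        have hpath₁ : (↑w₁.toPath : S.Walk u' y).IsPath := w₁.toPath.2
        rw [heq₁] at hpath₁
        have hur₁ : u' ∉ r₁.support := ((SimpleGraph.Walk.cons_isPath_iff _ _).mp hpath₁).2
        -- path avoiding y₁, second vertex must be x₀
        obtain ⟨w₂, hw₂⟩ := hdr2
        have hy₁w : y₁ ∉ (↑w₂.toPath : S.Walk u' y).support :=
          fun hmem => hw₂ (SimpleGraph.Walk.support_toPath_subset w₂ hmem)
        obtain ⟨z₂, ha₂, r₂, heq₂⟩ := SimpleGraph.Walk.not_nil_iff.mp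
          (SimpleGraph.Walk.not_nil_of_ne (p := (↑w₂.toPath : S.Walk u' y)) hyu)
        have hz₂ : z₂ = x₀ := by
          rcases uNbrs z₂ ha₂ with h | h
          · exact h
          · exfalso
            apply hy₁w
            rw [heq₂, SimpleGraph.Walk.support_cons]
            exact List.mem_cons_of_mem _ (h ▸ r₂.start_mem_support)
        have hpath₂ : (↑w₂.toPath : S.Walk u' y).IsPath := w₂.toPath.2
        rw [heq₂] at hpath₂
        have hur₂ : u' ∉ r₂.support := ((SimpleGraph.Walk.cons_isPath_iff _ _).mp hpath₂).2
        subst hz₁; subst hz₂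
        exact lemtwo hF (hSF ha₁) (hSF ha₂) (fun h => hy₁x₀ h)
          (r₁.mapLe hSF) (by rw [support_mapLe]; exact hur₁)
          (r₂.mapLe hSF) (by rw [support_mapLe]; exact hur₂)
      have h1 := Finset.card_le_card hsub
      have h2 : (Y \ (Y.filter (fun w => DReach S x₀ u' w))).card = m - W := by
        rw [Finset.card_sdiff_of_subset (Finset.filter_subset _ _)]
      have h3 : wt y₁ u' = (Y.filter (fun w => DReach S y₁ u' w)).card := rfl
      omega
    · have hu'x₀ : u' ≠ x₀ := by
        intro he
        have hadjx : S.Adj y₁ x₀ := he ▸ hadj'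
        refine lemtwo hF (hSF hadj.symm) (hSF hadj_uy₁) (fun h => hy₁x₀ h.symm)
          ((SimpleGraph.Walk.nil : S.Walk x₀ x₀).mapLe hSF) ?_
          ((SimpleGraph.Walk.cons hadjx (SimpleGraph.Walk.nil : S.Walk x₀ x₀)).mapLe hSF) ?_
        · rw [support_mapLe]
          intro hmem
          rw [SimpleGraph.Walk.support_nil] at hmem
          have h := List.mem_singleton.mp hmem
          exact hx₀u h.symm
        · rw [support_mapLe]
          intro hmem
          rw [SimpleGraph.Walk.support_cons, SimpleGraph.Walk.support_nil] at hmem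
          rcases List.mem_cons.mp hmem with h | h
          · exact huy₁ h
          · have h2 := List.mem_singleton.mp h
            exact hx₀u h2.symm
      have hsub : Y.filter (fun w => DReach S y₁ u' w)
          ⊆ (Y.filter (fun w => DReach S x₀ u w)).erase y₁ := by
        intro y hy
        obtain ⟨hyY, hdr⟩ := Finset.mem_filter.mp hy
        have hyy₁ : y ≠ y₁ := DReach.ne_end hdr
        obtain ⟨t, ht⟩ := hdr
        have hx₀t : x₀ ∉ t.support := by
          intro hx₀t
          have hsubsup := SimpleGraph.Walk.support_takeUntil_subset t hx₀t
          refine lemtwo hF (hSF hadj_uy₁.symm) (hSF hadj') (fun h => hu'u h.symm)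
            ((SimpleGraph.Walk.cons hadj.symm (SimpleGraph.Walk.nil : S.Walk x₀ x₀)).mapLe hSF) ?_
            ((t.takeUntil x₀ hx₀t).mapLe hSF) ?_
          · rw [support_mapLe]
            intro hmem
            rw [SimpleGraph.Walk.support_cons, SimpleGraph.Walk.support_nil] at hmem
            rcases List.mem_cons.mp hmem with h | h
            · exact huy₁ h.symm
            · have h2 := List.mem_singleton.mp h
              exact hy₁x₀ h2
          · rw [support_mapLe]
            exact fun hm' => ht (hsubsup hm')
        refine Finset.mem_erase.mpr ⟨hyy₁, Finset.mem_filter.mpr ⟨hyY, ?_⟩⟩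
        refine ⟨SimpleGraph.Walk.cons hadj_uy₁ (SimpleGraph.Walk.cons hadj' t), ?_⟩
        rw [SimpleGraph.Walk.support_cons, SimpleGraph.Walk.support_cons]
        intro hmem
        rcases List.mem_cons.mp hmem with h | h
        · exact hx₀u h
        rcases List.mem_cons.mp h with h' | h'
        · exact hy₁x₀ h'.symm
        · exact hx₀t h'
      have hy₁W : y₁ ∈ Y.filter (fun w => DReach S x₀ u w) := by
        refine Finset.mem_filter.mpr ⟨hy₁Y, ?_⟩
        refine ⟨SimpleGraph.Walk.cons hadj_uy₁ SimpleGraph.Walk.nil, ?_⟩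
        simp [SimpleGraph.Walk.support_cons, SimpleGraph.Walk.support_nil]
        exact ⟨hx₀u, hy₁x₀.symm⟩
      have h1 := Finset.card_le_card hsub
      have h2 : ((Y.filter (fun w => DReach S x₀ u w)).erase y₁).card = W - 1 :=
        Finset.card_erase_of_mem hy₁W
      have h3 : wt y₁ u' = (Y.filter (fun w => DReach S y₁ u' w)).card := rfl
      omega
  have hfy₁ : f y₁ ≤ W - 1 := by
    have : (Finset.univ.filter (fun u => S.Adj y₁ u)).sup (wt y₁) ≤ W - 1 := by
      apply Finset.sup_le
      intro u' hu'
      have := hbound u' (Finset.mem_filter.mp hu').2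
      omega
    exact this
  have hfx₀ : W ≤ f x₀ := by
    have : wt x₀ u ≤ (Finset.univ.filter (fun u => S.Adj x₀ u)).sup (wt x₀) :=
      Finset.le_sup (Finset.mem_filter.mpr ⟨Finset.mem_univ u, hadj⟩)
    exact this
  have := hx₀min y₁ hy₁Y
  omega

end Centroid

section Main
open Finset
variable {V : Type*} [Fintype V] [DecidableEq V]

lemma exists_min_violator (F : SimpleGraph V) [DecidableRel F.Adj] {D X : Finset V}
    (h : Violator F D X) :
    ∃ Y, Y ⊆ X ∧ Violator F D Y ∧ ∀ Z ⊆ Y, Z ≠ Y → ¬ Violator F D Z := by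
  classical
  set s := X.powerset.filter (fun Z => Violator F D Z) with hs
  have hXs : X ∈ s := Finset.mem_filter.mpr ⟨Finset.mem_powerset_self X, h⟩
  obtain ⟨Y, hYs, hmin⟩ := Finset.exists_min_image s Finset.card ⟨X, hXs⟩
  obtain ⟨hYpow, hYviol⟩ := Finset.mem_filter.mp hYs
  refine ⟨Y, Finset.mem_powerset.mp hYpow, hYviol, ?_⟩
  intro Z hZY hZne hZviol
  have hZs : Z ∈ s := Finset.mem_filter.mpr
    ⟨Finset.mem_powerset.mpr (hZY.trans (Finset.mem_powerset.mp hYpow)), hZviol⟩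
  have h1 := hmin Z hZs
  have h2 : Z.card < Y.card := Finset.card_lt_card (lt_of_le_of_ne hZY hZne)
  omega

lemma main_lemma (F : SimpleGraph V) [DecidableRel F.Adj] (hF : F.IsAcyclic) :
    ∀ k, 1 ≤ k → ∀ D X : Finset V, Violator F D X → X.card ≤ k →
      AttackerWinsIn F (Nat.clog 2 (2 * k)) D := by
  intro k
  induction k using Nat.strong_induction_on with
  | _ k ih =>
  intro hk D X hviolX hcard
  classical
  obtain ⟨Y, hYX, hviol, hmin⟩ := exists_min_violator F hviolX
  have hm1 : 1 ≤ Y.card := Finset.card_pos.mpr (Y_nonempty hviol)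
  have hmk : Y.card ≤ k := le_trans (Finset.card_le_card hYX) hcard
  have hclog1 : 1 ≤ Nat.clog 2 (2 * k) := Nat.clog_pos (by norm_num) (by omega)
  by_cases hm2 : Y.card = 1
  · -- base case : a single undominated vertex
    obtain ⟨y, hy⟩ := Finset.card_eq_one.mp hm2
    have hgN : gN F D Y = ∅ := by
      have := hviol.2
      rw [hm2] at this
      exact Finset.card_eq_zero.mp (by omega)
    have hyY : y ∈ Y := hy ▸ Finset.mem_singleton_self y
    have hstep : Nat.clog 2 (2 * k) = (Nat.clog 2 (2 * k) - 1) + 1 := by omega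
    rw [hstep]
    refine ⟨y, hviol.1 y hyY, fun u hu hadj => ?_⟩
    exfalso
    have : u ∈ gN F D Y := Finset.mem_filter.mpr ⟨hu, y, hyY, hadj⟩
    rw [hgN] at this
    exact Finset.notMem_empty u this
  · have hm2' : 2 ≤ Y.card := by omega
    set S := sg F D Y with hS
    have hSF : S ≤ F := sg_le F D Y
    obtain ⟨y₀, hy₀⟩ := Y_nonempty hviol
    have hbip1 : ∀ a b, S.Adj a b → a ∈ Y → b ∉ Y := by
      rintro a b ⟨_, ⟨_, hbG⟩ | ⟨haG, _⟩⟩ haY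
      · exact fun hbY => Y_disj_gN hviol hbY hbG
      · exact absurd haG (Y_disj_gN hviol haY)
    have hbip2 : ∀ a b, S.Adj a b → a ∉ Y → b ∈ Y := by
      rintro a b ⟨_, ⟨haY, _⟩ | ⟨_, hbY⟩⟩ ha
      · exact absurd haY ha
      · exact hbY
    have hdeg2 := nbrs_two hF hviol hmin hm2' hy₀
    obtain ⟨x₀, hx₀Y, hcent⟩ :=
      centroid hSF hF hbip1 hbip2 hdeg2 ⟨y₀, hy₀⟩
    have hid : Nat.clog 2 (2 * k) = Nat.clog 2 k + 1 := clog_two_double (by omega)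
    rw [hid]
    refine ⟨x₀, hviol.1 x₀ hx₀Y, fun u hu hadjF => ?_⟩
    have huG : u ∈ gN F D Y := Finset.mem_filter.mpr ⟨hu, x₀, hx₀Y, hadjF⟩
    have hSadj : S.Adj x₀ u := ⟨hadjF.symm, Or.inl ⟨hx₀Y, huG⟩⟩
    have hux₀ : u ≠ x₀ := (SimpleGraph.Adj.ne hSadj).symm
    set X' := Y.filter (fun w => DReach S x₀ u w) with hX'
    set K := (gN F D Y).filter (fun g => DReach S x₀ u g) with hK
    have hbnd : 2 * X'.card ≤ Y.card + 1 :=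
      hcent u hSadj X' (fun w => by rw [hX', Finset.mem_filter])
    -- the injection from K into X'
    have hKinj : ∀ g ∈ K, ∃ z, z ∈ X' ∧ par S x₀ z = g := by
      intro g hg
      obtain ⟨hgG, hgDR⟩ := Finset.mem_filter.mp hg
      obtain ⟨y₁, hy₁, y₂, hy₂, hne, hadj₁, hadj₂⟩ := noLeaf hviol hmin hm2' g hgG
      have hSadj₁ : S.Adj g y₁ := ⟨hadj₁, Or.inr ⟨hgG, hy₁⟩⟩
      have hSadj₂ : S.Adj g y₂ := ⟨hadj₂, Or.inr ⟨hgG, hy₂⟩⟩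
      have hgDR2 := hgDR
      obtain ⟨w, hw⟩ := hgDR2
      have hre : S.Reachable g x₀ := ((hSadj.reachable).trans ⟨w⟩).symm
      have hgx₀ : g ≠ x₀ := DReach.ne_end hgDR
      set z := if y₁ = par S x₀ g then y₂ else y₁ with hz
      have hzadj : S.Adj g z := by rw [hz]; split <;> assumption
      have hzpar : z ≠ par S x₀ g := by
        rw [hz]; split
        · rename_i hcase; exact fun he => hne (hcase.trans he.symm)
        · rename_i hcase; exact hcase
      have hzY : z ∈ Y := by rw [hz]; split <;> assumption
      obtain ⟨hparz, hzx₀, _⟩ := flip hSF hF hre hgx₀ hzadj hzpar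
      exact ⟨z, Finset.mem_filter.mpr ⟨hzY, DReach.step hgDR hzadj hzx₀⟩, hparz⟩
    have hKcard : K.card ≤ X'.card := by
      set fm : V → V := fun g =>
        if h : ∃ z, z ∈ X' ∧ par S x₀ z = g then h.choose else g with hfm
      apply Finset.card_le_card_of_injOn fm
      · intro g hg
        have h := hKinj g hg
        rw [hfm]
        simp only [dif_pos h]
        exact h.choose_spec.1
      · intro g₁ hg₁ g₂ hg₂ heq
        have h₁ := hKinj g₁ hg₁
        have h₂ := hKinj g₂ hg₂
        rw [hfm] at heq
        simp only [dif_pos h₁, dif_pos h₂] at heq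
        have e₁ := h₁.choose_spec.2
        have e₂ := h₂.choose_spec.2
        rw [← e₁, ← e₂, heq]
    have huK : u ∈ K := Finset.mem_filter.mpr ⟨huG, DReach.refl hux₀⟩
    have hX'pos : 0 < X'.card := by
      obtain ⟨z, hz, _⟩ := hKinj u huK
      exact Finset.card_pos.mpr ⟨z, hz⟩
    set D' := insert x₀ (D.erase u) with hD'
    have hsub : gN F D' X' ⊆ K.erase u := by
      intro w hw
      obtain ⟨hwD', y', hy'X', hadj'⟩ := Finset.mem_filter.mp hw
      obtain ⟨hy'Y, hy'DR⟩ := Finset.mem_filter.mp hy'X'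
      have hy'x₀ : y' ≠ x₀ := DReach.ne_end hy'DR
      have hwx₀ : w ≠ x₀ := by
        intro he
        obtain ⟨wk, hwk⟩ := hy'DR
        have huy' : u ≠ y' := fun hh => hviol.1 y' hy'Y (hh ▸ hu)
        exact lemtwo hF (hadjF.symm) (he ▸ hadj') huy'
          (wk.mapLe hSF) (by rw [support_mapLe]; exact hwk)
          (SimpleGraph.Walk.nil) (by
            rw [SimpleGraph.Walk.support_nil]
            intro hmem
            exact hy'x₀ (List.mem_singleton.mp hmem).symm)
      have hwDu : w ∈ D.erase u := by
        rcases Finset.mem_insert.mp hwD' with he | he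
        · exact absurd he hwx₀
        · exact he
      obtain ⟨hwu, hwD⟩ := Finset.mem_erase.mp hwDu
      have hwG : w ∈ gN F D Y := Finset.mem_filter.mpr ⟨hwD, y', hy'Y, hadj'⟩
      have hSadj' : S.Adj y' w := ⟨hadj'.symm, Or.inl ⟨hy'Y, hwG⟩⟩
      exact Finset.mem_erase.mpr
        ⟨hwu, Finset.mem_filter.mpr ⟨hwG, DReach.step hy'DR hSadj' hwx₀⟩⟩
    have hVp : Violator F D' X' := by
      constructor
      · intro y' hy'
        obtain ⟨hy'Y, hy'DR⟩ := Finset.mem_filter.mp hy'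
        intro hmem
        rcases Finset.mem_insert.mp hmem with he | he
        · exact (DReach.ne_end hy'DR) he
        · exact hviol.1 y' hy'Y (Finset.mem_erase.mp he).2
      · have h1 := Finset.card_le_card hsub
        have h2 : (K.erase u).card = K.card - 1 := Finset.card_erase_of_mem huK
        omega
    have hj : X'.card ≤ (Y.card + 1) / 2 := by omega
    have hk'lt : (Y.card + 1) / 2 < k := by omega
    have hk'1 : 1 ≤ (Y.card + 1) / 2 := by omega
    have hrec := ih _ hk'lt hk'1 D' X' hVp hj
    have harith : Nat.clog 2 (2 * ((Y.card + 1) / 2)) ≤ Nat.clog 2 k := by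
      rw [Nat.clog_le_iff_le_pow (by norm_num)]
      exact ar_lemma hm2' hmk
    exact aw_mono F _ _ _ harith hrec

end Main

end MobileDom

/-- If `T` is a tree on `n` vertices and `D` a set of guards, then either
`t_T(D) = +∞` or `t_T(D) ≤ ⌈log₂(n + 1)⌉`. -/
theorem stmt10 {V : Type*} [Fintype V] [DecidableEq V] (T : SimpleGraph V)
    (hT : T.IsTree) (D : Finset V) (h : gameValue T D ≠ ⊤) :
    gameValue T D ≤ (Nat.clog 2 (Fintype.card V + 1) : ℕ∞) := by
  classical
  haveI : DecidableRel T.Adj := Classical.decRel _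
  have hne : {n : ℕ∞ | ∃ t : ℕ, n = (t : ℕ∞) ∧ AttackerWinsIn T t D}.Nonempty := by
    by_contra hempty
    rw [Set.not_nonempty_iff_eq_empty] at hempty
    apply h
    rw [gameValue, hempty, sInf_empty]
  obtain ⟨n, t, hn, hAW⟩ := hne
  obtain ⟨X, hX⟩ := MobileDom.violator_of_win T hAW
  obtain ⟨Y, hYX, hviol, hmin⟩ := MobileDom.exists_min_violator T hX
  have hm1 : 1 ≤ Y.card := Finset.card_pos.mpr (MobileDom.Y_nonempty hviol)
  have hgc := MobileDom.gN_card hviol hmin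
  have hdisj : Disjoint Y (MobileDom.gN T D Y) := by
    rw [Finset.disjoint_left]
    intro a ha hg
    exact MobileDom.Y_disj_gN hviol ha hg
  have hcardle : Y.card + (MobileDom.gN T D Y).card ≤ Fintype.card V := by
    rw [← Finset.card_union_of_disjoint hdisj, ← Finset.card_univ]
    exact Finset.card_le_univ _
  have h2m : 2 * Y.card ≤ Fintype.card V + 1 := by omega
  have hAWm := MobileDom.main_lemma T hT.IsAcyclic Y.card hm1 D Y hviol (le_refl _)
  have h1 : gameValue T D ≤ ((Nat.clog 2 (2 * Y.card) : ℕ) : ℕ∞) :=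
    sInf_le ⟨Nat.clog 2 (2 * Y.card), rfl, hAWm⟩
  refine le_trans h1 ?_
  have := Nat.clog_mono_right 2 h2m
  exact_mod_cast this
end

section
/- Let L1 and L2 be non-increasing finite lists of positive integers with L1 ≤lex L2. Then cl(L1) ≤lex cl(L2). -/
/-- Lexicographic order `≤lex` on lists of naturals (a proper prefix is smaller). -/
def lexLe : List ℕ → List ℕ → Bool
  | [], _ => true
  | _ :: _, [] => false
  | a :: l1, b :: l2 => a < b || (a == b && lexLe l1 l2)

/-- The list `(k, k-1, …, 1)`. -/
def countdown (k : ℕ) : List ℕ :=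
  (List.range k).reverse.map (· + 1)

/-- A suffix is good when it is empty or `≥lex (k, k-1, …, 1)` where `k` is its
first element. -/
def goodSuffix (S : List ℕ) : Bool :=
  S.isEmpty || lexLe (countdown (S.headD 0)) S

/-- The closure `cl(L)` of a non-increasing list `L`: the longest good suffix `L_s`
of `L` is replaced by the one-element list `(k + 1)` where `k` is the first element
of `L_s` (by `(1)` if `L_s` is empty). -/
def cl (L : List ℕ) : List ℕ :=
  let Ls := (L.tails.find? goodSuffix).getD []
  L.take (L.length - Ls.length) ++ [Ls.headD 0 + 1]

/-!
Unfolding `cl` one entry at a time, `cl (a :: T)` is `[a + 1]` when `a :: T` is itself a good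
suffix and `a :: cl T` otherwise. The claim then follows by induction along the two lists: when
the heads differ the comparison is decided by the heads, and when they agree, goodness of
`a :: T` is monotone in `T` for `≤lex` (it says `countdown a ≤lex a :: T`), so either both lists
collapse, only the larger one collapses, or neither does and the induction hypothesis applies.
-/

@[simp]
theorem lexLe_nil_left (l : List ℕ) : lexLe [] l = true := rfl

@[simp]
theorem lexLe_cons_nil (a : ℕ) (l : List ℕ) : lexLe (a :: l) [] = false := rfl

@[simp]
theorem lexLe_cons_cons (a b : ℕ) (l1 l2 : List ℕ) :
    lexLe (a :: l1) (b :: l2) = true ↔ a < b ∨ a = b ∧ lexLe l1 l2 = true := by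
  simp [lexLe]

theorem lexLe_trans {a b c : List ℕ} (hab : lexLe a b = true) (hbc : lexLe b c = true) :
    lexLe a c = true := by
  induction a generalizing b c with
  | nil => rfl
  | cons x a ih =>
    match b, c with
    | [], _ => simp at hab
    | _ :: _, [] => simp at hbc
    | y :: b, z :: c =>
      simp only [lexLe_cons_cons] at hab hbc ⊢
      rcases hab with hxy | ⟨rfl, hab⟩ <;> rcases hbc with hyz | ⟨rfl, hbc⟩
      · exact .inl (hxy.trans hyz)
      · exact .inl hxy
      · exact .inl hyz
      · exact .inr ⟨rfl, ih hab hbc⟩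

theorem goodSuffix_cons_of_lexLe {a : ℕ} {t1 t2 : List ℕ} (hg : goodSuffix (a :: t1) = true)
    (ht : lexLe t1 t2 = true) : goodSuffix (a :: t2) = true := by
  simp only [goodSuffix, List.isEmpty_cons, Bool.false_or, List.headD_cons] at hg ⊢
  exact lexLe_trans hg (by simpa using ht)

theorem length_find?_goodSuffix_tails_le (T : List ℕ) :
    ∃ Ls, T.tails.find? goodSuffix = some Ls ∧ Ls.length ≤ T.length := by
  obtain ⟨Ls, hLs⟩ : ∃ Ls, T.tails.find? goodSuffix = some Ls :=
    Option.isSome_iff_exists.mp (List.find?_isSome.mpr ⟨[], by simp, rfl⟩)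
  exact ⟨Ls, hLs, ((List.mem_tails _ _).1 (List.mem_of_find?_eq_some hLs)).length_le⟩

theorem cl_nil : cl [] = [1] := rfl

theorem cl_cons (a : ℕ) (T : List ℕ) :
    cl (a :: T) = if goodSuffix (a :: T) then [a + 1] else a :: cl T := by
  by_cases hg : goodSuffix (a :: T) = true
  · simp [cl, hg]
  · obtain ⟨Ls, hLs, hlen⟩ := length_find?_goodSuffix_tails_le T
    have hfind : (a :: T).tails.find? goodSuffix = some Ls := by
      rwa [List.tails_cons, List.find?_cons_of_neg hg]
    have hsub : T.length + 1 - Ls.length = T.length - Ls.length + 1 := by omega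
    simp only [cl, hfind, hLs, Option.getD_some, List.length_cons, hsub, List.take_succ_cons,
      List.cons_append, if_neg hg]

theorem lexLe_cl_nil_cl_cons {b : ℕ} (hb : 0 < b) (t : List ℕ) :
    lexLe (cl []) (cl (b :: t)) = true := by
  rw [cl_nil, cl_cons]
  split_ifs <;> simp <;> omega

theorem lexLe_cl_cons_of_lt {a b : ℕ} (hab : a < b) (t1 t2 : List ℕ) :
    lexLe (cl (a :: t1)) (cl (b :: t2)) = true := by
  rw [cl_cons, cl_cons]
  split_ifs <;> simp <;> omega

theorem lexLe_cl_cons_cons (a : ℕ) {t1 t2 : List ℕ} (ht : lexLe t1 t2 = true)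
    (hcl : lexLe (cl t1) (cl t2) = true) : lexLe (cl (a :: t1)) (cl (a :: t2)) = true := by
  rw [cl_cons, cl_cons]
  by_cases g1 : goodSuffix (a :: t1) = true
  · simp [g1, goodSuffix_cons_of_lexLe g1 ht]
  · by_cases g2 : goodSuffix (a :: t2) = true <;> simp [g1, g2, hcl]

theorem stmt11_general (L1 L2 : List ℕ)
    (hp2 : ∀ x ∈ L2, 0 < x)
    (h : lexLe L1 L2 = true) :
    lexLe (cl L1) (cl L2) = true := by
  induction L1 generalizing L2 with
  | nil =>
    cases L2 with
    | nil => rfl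
    | cons b t => exact lexLe_cl_nil_cl_cons (hp2 b List.mem_cons_self) t
  | cons a t1 ih =>
    cases L2 with
    | nil => simp at h
    | cons b t2 =>
      rcases (lexLe_cons_cons a b t1 t2).mp h with hab | ⟨rfl, ht⟩
      · exact lexLe_cl_cons_of_lt hab t1 t2
      · exact lexLe_cl_cons_cons a ht (ih t2 (fun x hx => hp2 x (List.mem_cons_of_mem a hx)) ht)

/-- If `L1, L2` are non-increasing lists of positive integers with `L1 ≤lex L2`,
then `cl(L1) ≤lex cl(L2)`. -/
theorem stmt11 (L1 L2 : List ℕ)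
    (h1 : L1.Pairwise (· ≥ ·)) (h2 : L2.Pairwise (· ≥ ·))
    (hp1 : ∀ x ∈ L1, 0 < x) (hp2 : ∀ x ∈ L2, 0 < x)
    (h : lexLe L1 L2 = true) :
    lexLe (cl L1) (cl L2) = true :=
  stmt11_general L1 L2 hp2 h
end

section
/- Let G1, G2 be two graphs, D1 ⊆ V(G1) and D2 ⊆ V(G2) sets of guards, and r ≥ 0. Then t_{G1 ∪ G2}(D1 ∪ D2, r) ≤ min over 0 ≤ i ≤ r of (t_{G1}(D1, i) + t_{G2}(D2, r − i)), where G1 ∪ G2 is the disjoint union of G1 and G2. -/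
/-- `ResWinsIn G t D r` : in the eternal domination game with reservists on
`(G, D, r)`, Attacker can force Defender to use up all `r` reservists within `t`
turns.  At each turn Attacker attacks an unguarded vertex `v`, and Defender either
moves a guard from a neighbor of `v` to `v`, or places a new guard (a reservist)
on `v`; Attacker wins when `r` reaches `0`. -/
def ResWinsIn {V : Type*} [DecidableEq V] (G : SimpleGraph V) :
    ℕ → Finset V → ℕ → Prop
  | _, _, 0 => True
  | 0, _, _ + 1 => False
  | (t + 1), D, (r + 1) => ∃ v, v ∉ D ∧
      (∀ u ∈ D, G.Adj u v → ResWinsIn G t (insert v (D.erase u)) (r + 1)) ∧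
      ResWinsIn G t (insert v D) r

/-- `t_G(D, r)` : the minimum number of turns within which Attacker can force a
win in the game with reservists (`⊤` if he cannot); `t_G(D, 0) = 0`. -/
noncomputable def resGameValue {V : Type*} [DecidableEq V] (G : SimpleGraph V)
    (D : Finset V) (r : ℕ) : ℕ∞ :=
  sInf {n : ℕ∞ | ∃ t : ℕ, n = (t : ℕ∞) ∧ ResWinsIn G t D r}

/-- The disjoint union of two graphs. -/
def dUnion {V1 V2 : Type*} (G1 : SimpleGraph V1) (G2 : SimpleGraph V2) :
    SimpleGraph (V1 ⊕ V2) :=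
  SimpleGraph.fromRel fun a b =>
    (∃ u v, a = Sum.inl u ∧ b = Sum.inl v ∧ G1.Adj u v) ∨
    (∃ u v, a = Sum.inr u ∧ b = Sum.inr v ∧ G2.Adj u v)

section Aux

variable {V1 V2 : Type*} [DecidableEq V1] [DecidableEq V2]
  {G1 : SimpleGraph V1} {G2 : SimpleGraph V2}

lemma duAdj_inl {a : V1 ⊕ V2} {v : V1} (h : (dUnion G1 G2).Adj a (Sum.inl v)) :
    ∃ u, a = Sum.inl u ∧ G1.Adj u v := by
  rw [dUnion, SimpleGraph.fromRel_adj] at h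
  obtain ⟨hne, h | h⟩ := h
  · rcases h with ⟨u, w, rfl, hw, h⟩ | ⟨u, w, rfl, hw, h⟩
    · exact ⟨u, rfl, (Sum.inl.inj hw) ▸ h⟩
    · exact absurd hw (by simp)
  · rcases h with ⟨u, w, hu, rfl, h⟩ | ⟨u, w, hu, rfl, h⟩
    · exact ⟨w, rfl, ((Sum.inl.inj hu) ▸ h).symm⟩
    · exact absurd hu (by simp)

lemma duAdj_inr {a : V1 ⊕ V2} {v : V2} (h : (dUnion G1 G2).Adj a (Sum.inr v)) :
    ∃ u, a = Sum.inr u ∧ G2.Adj u v := by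
  rw [dUnion, SimpleGraph.fromRel_adj] at h
  obtain ⟨hne, h | h⟩ := h
  · rcases h with ⟨u, w, rfl, hw, h⟩ | ⟨u, w, rfl, hw, h⟩
    · exact absurd hw (by simp)
    · exact ⟨u, rfl, (Sum.inr.inj hw) ▸ h⟩
  · rcases h with ⟨u, w, hu, rfl, h⟩ | ⟨u, w, hu, rfl, h⟩
    · exact absurd hu (by simp)
    · exact ⟨w, rfl, ((Sum.inr.inj hu) ▸ h).symm⟩

lemma ds_insert_inl (D1 : Finset V1) (D2 : Finset V2) (v : V1) :
    insert (Sum.inl v : V1 ⊕ V2) (D1.disjSum D2) = (insert v D1).disjSum D2 := by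
  ext x; cases x <;> simp
lemma ds_insert_inr (D1 : Finset V1) (D2 : Finset V2) (v : V2) :
    insert (Sum.inr v : V1 ⊕ V2) (D1.disjSum D2) = D1.disjSum (insert v D2) := by
  ext x; cases x <;> simp
lemma ds_erase_inl (D1 : Finset V1) (D2 : Finset V2) (u : V1) :
    (D1.disjSum D2).erase (Sum.inl u) = (D1.erase u).disjSum D2 := by
  ext x; cases x <;> simp [Finset.mem_erase]
lemma ds_erase_inr (D1 : Finset V1) (D2 : Finset V2) (u : V2) :
    (D1.disjSum D2).erase (Sum.inr u) = D1.disjSum (D2.erase u) := by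
  ext x; cases x <;> simp [Finset.mem_erase]

lemma ResWinsIn.mono {V : Type*} [DecidableEq V] {G : SimpleGraph V} :
    ∀ (t : ℕ) (D : Finset V) (r : ℕ), ResWinsIn G t D r → ResWinsIn G (t + 1) D r := by
  intro t
  induction t with
  | zero =>
    intro D r h
    cases r with
    | zero => trivial
    | succ r => exact h.elim
  | succ t ih =>
    intro D r h
    cases r with
    | zero => trivial
    | succ r =>
      obtain ⟨v, hv, hmove, hplace⟩ := h
      exact ⟨v, hv, fun u hu hadj => ih _ _ (hmove u hu hadj), ih _ _ hplace⟩

lemma ResWinsIn.mono_add {V : Type*} [DecidableEq V] {G : SimpleGraph V}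
    (k t : ℕ) (D : Finset V) (r : ℕ) (h : ResWinsIn G t D r) :
    ResWinsIn G (t + k) D r := by
  induction k with
  | zero => exact h
  | succ k ih => exact ResWinsIn.mono _ _ _ ih

lemma lift2 : ∀ (t : ℕ) (D2 : Finset V2) (r : ℕ), ResWinsIn G2 t D2 r →
    ∀ D1 : Finset V1, ResWinsIn (dUnion G1 G2) t (D1.disjSum D2) r := by
  intro t
  induction t with
  | zero =>
    intro D2 r h D1
    cases r with
    | zero => trivial
    | succ r => exact h.elim
  | succ t ih =>
    intro D2 r h D1
    cases r with
    | zero => trivial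
    | succ r =>
      obtain ⟨v, hv, hmove, hplace⟩ := h
      refine ⟨Sum.inr v, by simpa using hv, ?_, ?_⟩
      · intro u hu hadj
        obtain ⟨u', rfl, hadj'⟩ := duAdj_inr hadj
        rw [ds_erase_inr, ds_insert_inr]
        exact ih _ _ (hmove u' (by simpa using hu) hadj') D1
      · rw [ds_insert_inr]
        exact ih _ _ hplace D1

lemma comb : ∀ (t1 : ℕ) (D1 : Finset V1) (i : ℕ), ResWinsIn G1 t1 D1 i →
    ∀ (t2 : ℕ) (D2 : Finset V2) (j : ℕ), ResWinsIn G2 t2 D2 j →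
    ResWinsIn (dUnion G1 G2) (t1 + t2) (D1.disjSum D2) (i + j) := by
  intro t1
  induction t1 with
  | zero =>
    intro D1 i h1 t2 D2 j h2
    cases i with
    | zero => simpa using lift2 t2 D2 j h2 D1
    | succ i => exact h1.elim
  | succ t1 ih =>
    intro D1 i h1 t2 D2 j h2
    cases i with
    | zero =>
      simp only [Nat.zero_add]
      rw [show t1 + 1 + t2 = t2 + (t1 + 1) from by omega]
      exact ResWinsIn.mono_add _ _ _ _ (lift2 t2 D2 j h2 D1)
    | succ i =>
      obtain ⟨v, hv, hmove, hplace⟩ := h1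
      rw [show t1 + 1 + t2 = (t1 + t2) + 1 from by omega,
          show i + 1 + j = (i + j) + 1 from by omega]
      refine ⟨Sum.inl v, by simpa using hv, ?_, ?_⟩
      · intro u hu hadj
        obtain ⟨u', rfl, hadj'⟩ := duAdj_inl hadj
        rw [ds_erase_inl, ds_insert_inl]
        have := ih _ _ (hmove u' (by simpa using hu) hadj') t2 D2 j h2
        rwa [show i + 1 + j = (i + j) + 1 from by omega] at this
      · rw [ds_insert_inl]
        exact ih _ _ hplace t2 D2 j h2

end Aux

/-- `t_{G1 ∪ G2}(D1 ∪ D2, r) ≤ min_{0 ≤ i ≤ r} (t_{G1}(D1, i) + t_{G2}(D2, r − i))`. -/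
theorem stmt15 {V1 V2 : Type*} [DecidableEq V1] [DecidableEq V2]
    (G1 : SimpleGraph V1) (G2 : SimpleGraph V2)
    (D1 : Finset V1) (D2 : Finset V2) (r : ℕ) :
    resGameValue (dUnion G1 G2) (D1.disjSum D2) r ≤
      ⨅ i ∈ Finset.Iic r, (resGameValue G1 D1 i + resGameValue G2 D2 (r - i)) := by
  refine le_iInf₂ fun i hi => ?_
  have hir : i ≤ r := Finset.mem_Iic.mp hi
  by_cases ha : resGameValue G1 D1 i = ⊤
  · simp [ha]
  by_cases hb : resGameValue G2 D2 (r - i) = ⊤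
  · simp [hb]
  have hne1 : {n : ℕ∞ | ∃ t : ℕ, n = (t : ℕ∞) ∧ ResWinsIn G1 t D1 i}.Nonempty := by
    by_contra h
    rw [Set.not_nonempty_iff_eq_empty] at h
    exact ha (by simp [resGameValue, h])
  have hne2 : {n : ℕ∞ | ∃ t : ℕ, n = (t : ℕ∞) ∧ ResWinsIn G2 t D2 (r - i)}.Nonempty := by
    by_contra h
    rw [Set.not_nonempty_iff_eq_empty] at h
    exact hb (by simp [resGameValue, h])
  obtain ⟨t1, h1eq, h1⟩ := csInf_mem hne1
  obtain ⟨t2, h2eq, h2⟩ := csInf_mem hne2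
  have hwin : ResWinsIn (dUnion G1 G2) (t1 + t2) (D1.disjSum D2) r := by
    have := comb t1 D1 i h1 t2 D2 (r - i) h2
    rwa [show i + (r - i) = r from by omega] at this
  calc resGameValue (dUnion G1 G2) (D1.disjSum D2) r
      ≤ ((t1 + t2 : ℕ) : ℕ∞) := sInf_le ⟨t1 + t2, rfl, hwin⟩
    _ = resGameValue G1 D1 i + resGameValue G2 D2 (r - i) := by
        rw [resGameValue, resGameValue, h1eq, h2eq]; push_cast; ring
end

section
/- Let G1, G2 be two graphs, D1 ⊆ V(G1) and D2 ⊆ V(G2) sets of guards, and r ≥ 0. Then t_{G1 ⋈ G2}(D1 ∪ D2, r) ≤ min { t_{G1}(D1, r + |D2|), t_{G2}(D2, r + |D1|) }, where G1 ⋈ G2 is the complete join of G1 and G2 (all edges between V(G1) and V(G2) are added). -/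
/-- The complete join of two graphs: all edges between `V(G1)` and `V(G2)` are added. -/
def dJoin {V1 V2 : Type*} (G1 : SimpleGraph V1) (G2 : SimpleGraph V2) :
    SimpleGraph (V1 ⊕ V2) :=
  SimpleGraph.fromRel fun a b =>
    (∃ u v, a = Sum.inl u ∧ b = Sum.inl v ∧ G1.Adj u v) ∨
    (∃ u v, a = Sum.inr u ∧ b = Sum.inr v ∧ G2.Adj u v) ∨
    (∃ u v, a = Sum.inl u ∧ b = Sum.inr v)

set_option linter.unusedSectionVars false

lemma resWinsIn_zero {V : Type*} [DecidableEq V] (G : SimpleGraph V) (t : ℕ) (D : Finset V) :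
    ResWinsIn G t D 0 := by cases t <;> exact trivial

lemma resWinsIn_succ {V : Type*} [DecidableEq V] (G : SimpleGraph V) (t : ℕ) (D : Finset V)
    (r : ℕ) :
    ResWinsIn G (t+1) D (r+1) ↔ ∃ v, v ∉ D ∧
      (∀ u ∈ D, G.Adj u v → ResWinsIn G t (insert v (D.erase u)) (r + 1)) ∧
      ResWinsIn G t (insert v D) r := Iff.rfl

section lemmas
variable {V1 V2 : Type*} [DecidableEq V1] [DecidableEq V2]
  (G1 : SimpleGraph V1) (G2 : SimpleGraph V2)

lemma dJoin_adj_ll {u v : V1} : (dJoin G1 G2).Adj (Sum.inl u) (Sum.inl v) ↔ G1.Adj u v := by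
  simp only [dJoin, SimpleGraph.fromRel_adj]
  constructor
  · rintro ⟨hne, (⟨a,b,ha,hb,hab⟩|⟨a,b,ha,hb,hab⟩|⟨a,b,ha,hb⟩)|(⟨a,b,ha,hb,hab⟩|⟨a,b,ha,hb,hab⟩|⟨a,b,ha,hb⟩)⟩
    · simp_all
    · simp_all
    · simp_all
    · cases Sum.inl.inj ha; cases Sum.inl.inj hb; exact hab.symm
    · simp_all
    · simp_all
  · intro h
    exact ⟨by simpa using h.ne, Or.inl (Or.inl ⟨u, v, rfl, rfl, h⟩)⟩

lemma dJoin_adj_rr {u v : V2} : (dJoin G1 G2).Adj (Sum.inr u) (Sum.inr v) ↔ G2.Adj u v := by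
  simp only [dJoin, SimpleGraph.fromRel_adj]
  constructor
  · rintro ⟨hne, (⟨a,b,ha,hb,hab⟩|⟨a,b,ha,hb,hab⟩|⟨a,b,ha,hb⟩)|(⟨a,b,ha,hb,hab⟩|⟨a,b,ha,hb,hab⟩|⟨a,b,ha,hb⟩)⟩
    · simp_all
    · simp_all
    · simp_all
    · simp_all
    · cases Sum.inr.inj ha; cases Sum.inr.inj hb; exact hab.symm
    · simp_all
  · intro h
    exact ⟨by simpa using h.ne, Or.inl (Or.inr (Or.inl ⟨u, v, rfl, rfl, h⟩))⟩

omit [DecidableEq V1] [DecidableEq V2] in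
lemma dJoin_adj_lr (u : V1) (v : V2) : (dJoin G1 G2).Adj (Sum.inl u) (Sum.inr v) := by
  simp [dJoin, SimpleGraph.fromRel_adj]

omit [DecidableEq V1] [DecidableEq V2] in
lemma dJoin_adj_rl (u : V2) (v : V1) : (dJoin G1 G2).Adj (Sum.inr u) (Sum.inl v) :=
  ((dJoin G1 G2).adj_symm (dJoin_adj_lr G1 G2 v u))

lemma disjSum_insert_l (v : V1) (D1 : Finset V1) (D2 : Finset V2) :
    (insert v D1).disjSum D2 = insert (Sum.inl v) (D1.disjSum D2) := by
  ext x; cases x <;> simp [or_assoc]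

lemma disjSum_insert_r (v : V2) (D1 : Finset V1) (D2 : Finset V2) :
    D1.disjSum (insert v D2) = insert (Sum.inr v) (D1.disjSum D2) := by
  ext x; cases x <;> simp <;> tauto

lemma disjSum_erase_l (u : V1) (D1 : Finset V1) (D2 : Finset V2) :
    (D1.erase u).disjSum D2 = (D1.disjSum D2).erase (Sum.inl u) := by
  ext x; cases x <;> simp [and_comm]

lemma disjSum_erase_r (u : V2) (D1 : Finset V1) (D2 : Finset V2) :
    D1.disjSum (D2.erase u) = (D1.disjSum D2).erase (Sum.inr u) := by
  ext x; cases x <;> simp [and_comm]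

lemma key_left : ∀ (t : ℕ) (D1 : Finset V1) (D2 : Finset V2) (r : ℕ),
    ResWinsIn G1 t D1 (r + D2.card) →
    ResWinsIn (dJoin G1 G2) t (D1.disjSum D2) r := by
  intro t
  induction t with
  | zero =>
    intro D1 D2 r h
    match r with
    | 0 => exact resWinsIn_zero _ _ _
    | r + 1 =>
      exfalso
      have : r + 1 + D2.card = (r + D2.card) + 1 := by omega
      rw [this] at h
      exact h
  | succ t ih =>
    intro D1 D2 r h
    match r with
    | 0 => exact resWinsIn_zero _ _ _
    | r + 1 =>
      have e : r + 1 + D2.card = (r + D2.card) + 1 := by omega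
      rw [e, resWinsIn_succ] at h
      obtain ⟨v, hv, hmove, hres⟩ := h
      rw [resWinsIn_succ]
      refine ⟨Sum.inl v, by simpa using hv, ?_, ?_⟩
      · rintro (u1 | u2) hu hadj
        · rw [Finset.inl_mem_disjSum] at hu
          rw [dJoin_adj_ll] at hadj
          have := hmove u1 hu hadj
          rw [show r + D2.card + 1 = (r + 1) + D2.card from by omega] at this
          have := ih (insert v (D1.erase u1)) D2 (r + 1) this
          rwa [disjSum_insert_l, disjSum_erase_l] at this
        · rw [Finset.inr_mem_disjSum] at hu
          have hcard : r + 1 + (D2.erase u2).card = r + D2.card := by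
            rw [Finset.card_erase_of_mem hu]
            have : 1 ≤ D2.card := Finset.card_pos.mpr ⟨u2, hu⟩
            omega
          have : ResWinsIn G1 t (insert v D1) (r + 1 + (D2.erase u2).card) := by
            rwa [hcard]
          have := ih (insert v D1) (D2.erase u2) (r + 1) this
          rwa [disjSum_insert_l, disjSum_erase_r] at this
      · have := ih (insert v D1) D2 r hres
        rwa [disjSum_insert_l] at this

lemma key_right : ∀ (t : ℕ) (D1 : Finset V1) (D2 : Finset V2) (r : ℕ),
    ResWinsIn G2 t D2 (r + D1.card) →
    ResWinsIn (dJoin G1 G2) t (D1.disjSum D2) r := by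
  intro t
  induction t with
  | zero =>
    intro D1 D2 r h
    match r with
    | 0 => exact resWinsIn_zero _ _ _
    | r + 1 =>
      exfalso
      have : r + 1 + D1.card = (r + D1.card) + 1 := by omega
      rw [this] at h
      exact h
  | succ t ih =>
    intro D1 D2 r h
    match r with
    | 0 => exact resWinsIn_zero _ _ _
    | r + 1 =>
      have e : r + 1 + D1.card = (r + D1.card) + 1 := by omega
      rw [e, resWinsIn_succ] at h
      obtain ⟨v, hv, hmove, hres⟩ := h
      rw [resWinsIn_succ]
      refine ⟨Sum.inr v, by simpa using hv, ?_, ?_⟩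
      · rintro (u1 | u2) hu hadj
        · rw [Finset.inl_mem_disjSum] at hu
          have hcard : r + 1 + (D1.erase u1).card = r + D1.card := by
            rw [Finset.card_erase_of_mem hu]
            have : 1 ≤ D1.card := Finset.card_pos.mpr ⟨u1, hu⟩
            omega
          have : ResWinsIn G2 t (insert v D2) (r + 1 + (D1.erase u1).card) := by
            rwa [hcard]
          have := ih (D1.erase u1) (insert v D2) (r + 1) this
          rwa [disjSum_insert_r, disjSum_erase_l] at this
        · rw [Finset.inr_mem_disjSum] at hu
          rw [dJoin_adj_rr] at hadj
          have := hmove u2 hu hadj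
          rw [show r + D1.card + 1 = (r + 1) + D1.card from by omega] at this
          have := ih D1 (insert v (D2.erase u2)) (r + 1) this
          rwa [disjSum_insert_r, disjSum_erase_r] at this
      · have := ih D1 (insert v D2) r hres
        rwa [disjSum_insert_r] at this

end lemmas

/-- `t_{G1 ⋈ G2}(D1 ∪ D2, r) ≤ min { t_{G1}(D1, r + |D2|), t_{G2}(D2, r + |D1|) }`. -/
theorem stmt16 {V1 V2 : Type*} [DecidableEq V1] [DecidableEq V2]
    (G1 : SimpleGraph V1) (G2 : SimpleGraph V2)
    (D1 : Finset V1) (D2 : Finset V2) (r : ℕ) :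
    resGameValue (dJoin G1 G2) (D1.disjSum D2) r ≤
      min (resGameValue G1 D1 (r + D2.card)) (resGameValue G2 D2 (r + D1.card)) := by
  refine le_min ?_ ?_
  · apply sInf_le_sInf
    rintro n ⟨t, rfl, hw⟩
    exact ⟨t, rfl, key_left G1 G2 t D1 D2 r hw⟩
  · apply sInf_le_sInf
    rintro n ⟨t, rfl, hw⟩
    exact ⟨t, rfl, key_right G1 G2 t D1 D2 r hw⟩
end

section
/- Let G be a graph and k ≥ 1. Let G' be obtained from G by adding k − 1 new vertices u_1, …, u_{k−1}, each adjacent to all vertices of G, and let D = {u_1, …, u_{k−1}}. Then G has an independent set of size k if and only if t_{G'}(D) ≤ k. -/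
/-- The graph `G'` obtained from `G` by adding `k - 1` new vertices
`u_1, …, u_{k-1}` (the `Fin (k-1)` part), each adjacent to all vertices of `G`. -/
def addUniv {V : Type*} (G : SimpleGraph V) (k : ℕ) :
    SimpleGraph (V ⊕ Fin (k - 1)) :=
  SimpleGraph.fromRel fun a b =>
    (∃ u v, a = Sum.inl u ∧ b = Sum.inl v ∧ G.Adj u v) ∨
    (∃ u i, a = Sum.inl u ∧ b = Sum.inr i)

/-- The guard set `D = {u_1, …, u_{k-1}}`. -/
def univGuards (V : Type*) (k : ℕ) : Finset (V ⊕ Fin (k - 1)) :=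
  (Finset.univ : Finset (Fin (k - 1))).map ⟨Sum.inr, Sum.inr_injective⟩

set_option linter.unusedSectionVars false

namespace Stmt17Aux

variable {V : Type*} [DecidableEq V] (G : SimpleGraph V) (k : ℕ)

def guards (k : ℕ) (S : Finset V) (R : Finset (Fin (k-1))) : Finset (V ⊕ Fin (k-1)) :=
  S.map ⟨Sum.inl, Sum.inl_injective⟩ ∪ R.map ⟨Sum.inr, Sum.inr_injective⟩

@[simp] lemma mem_guards_inl {k : ℕ} {a : V} {S : Finset V} {R : Finset (Fin (k-1))} :
    Sum.inl a ∈ guards k S R ↔ a ∈ S := by simp [guards]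

@[simp] lemma mem_guards_inr {k : ℕ} {i : Fin (k-1)} {S : Finset V} {R : Finset (Fin (k-1))} :
    Sum.inr i ∈ guards k S R ↔ i ∈ R := by simp [guards]

lemma adj_inl_inl {k : ℕ} {a b : V} :
    (addUniv G k).Adj (Sum.inl a) (Sum.inl b) ↔ G.Adj a b := by
  constructor
  · rintro ⟨h1, (⟨u,w,hu,hw,h⟩|⟨u,i,hu,hw⟩)|(⟨u,w,hu,hw,h⟩|⟨u,i,hu,hw⟩)⟩ <;>
      simp_all
    exact h.symm
  · intro h
    exact ⟨by simp [h.ne], Or.inl (Or.inl ⟨a, b, rfl, rfl, h⟩)⟩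

lemma adj_inl_inr {k : ℕ} {a : V} {i : Fin (k-1)} :
    (addUniv G k).Adj (Sum.inl a) (Sum.inr i) := by
  exact ⟨by simp, Or.inl (Or.inr ⟨a, i, rfl, rfl⟩)⟩

lemma adj_inr_inl {k : ℕ} {a : V} {i : Fin (k-1)} :
    (addUniv G k).Adj (Sum.inr i) (Sum.inl a) := (adj_inl_inr G).symm

lemma not_adj_inr_inr {k : ℕ} {i j : Fin (k-1)} :
    ¬ (addUniv G k).Adj (Sum.inr i) (Sum.inr j) := by
  rintro ⟨h1, h2 | h2⟩ <;> simp_all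

lemma move_ll {k : ℕ} (a b : V) (S : Finset V) (R : Finset (Fin (k-1))) :
    insert (Sum.inl a) ((guards k S R).erase (Sum.inl b)) = guards k (insert a (S.erase b)) R := by
  ext x; cases x <;> simp [guards] <;> tauto

lemma move_lr {k : ℕ} (a : V) (i : Fin (k-1)) (S : Finset V) (R : Finset (Fin (k-1))) :
    insert (Sum.inl a) ((guards k S R).erase (Sum.inr i)) = guards k (insert a S) (R.erase i) := by
  ext x; cases x <;> simp [guards] <;> tauto

lemma move_rl {k : ℕ} (i : Fin (k-1)) (b : V) (S : Finset V) (R : Finset (Fin (k-1))) :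
    insert (Sum.inr i) ((guards k S R).erase (Sum.inl b)) = guards k (S.erase b) (insert i R) := by
  ext x; cases x <;> simp [guards] <;> tauto

end Stmt17Aux

namespace Stmt17Aux

variable {V : Type*} [DecidableEq V] {G : SimpleGraph V} {k : ℕ}

/-- Lemma A: if there are at least `t` universal guards, Defender survives `t` turns. -/
lemma lemA : ∀ (t : ℕ) (S : Finset V) (R : Finset (Fin (k-1))),
    S.card + R.card = k - 1 → t ≤ R.card →
    AttackerWinsIn (addUniv G k) t (guards k S R) → False := by
  intro t
  induction t with
  | zero => intro S R _ _ h; exact h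
  | succ t ih =>
    intro S R hsum ht h
    obtain ⟨v, hv, hresp⟩ := h
    match v with
    | Sum.inl a =>
      have haS : a ∉ S := by simpa using hv
      obtain ⟨i, hi⟩ : R.Nonempty := Finset.card_pos.mp (by omega)
      have h2 := hresp (Sum.inr i) (by simpa) (adj_inr_inl G)
      rw [move_lr] at h2
      exact ih (insert a S) (R.erase i)
        (by rw [Finset.card_insert_of_notMem haS, Finset.card_erase_of_mem hi]; omega)
        (by rw [Finset.card_erase_of_mem hi]; omega) h2
    | Sum.inr i =>
      have hiR : i ∉ R := by simpa using hv
      have hRlt : R.card < k - 1 := by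
        rcases lt_or_ge R.card (k-1) with h' | h'
        · exact h'
        · exfalso
          have hle : R.card ≤ k - 1 := by
            simpa using Finset.card_le_card (Finset.subset_univ R)
          have : R = Finset.univ := Finset.eq_univ_of_card R (by simpa using le_antisymm hle h')
          exact hiR (this ▸ Finset.mem_univ i)
      obtain ⟨b, hb⟩ : S.Nonempty := Finset.card_pos.mp (by omega)
      have h2 := hresp (Sum.inl b) (by simpa) (adj_inl_inr G)
      rw [move_rl] at h2
      exact ih (S.erase b) (insert i R)
        (by rw [Finset.card_insert_of_notMem hiR, Finset.card_erase_of_mem hb]; omega)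
        (by rw [Finset.card_insert_of_notMem hiR]; omega) h2

/-- Lemma B: with one universal guard fewer than `t`, a win produces an independent `k`-set. -/
lemma lemB (hk : 1 ≤ k) : ∀ (t : ℕ) (S : Finset V) (R : Finset (Fin (k-1))),
    (∀ a ∈ S, ∀ b ∈ S, a ≠ b → ¬ G.Adj a b) →
    S.card + R.card = k - 1 → t = R.card + 1 →
    AttackerWinsIn (addUniv G k) t (guards k S R) →
    ∃ J : Finset V, J.card = k ∧ ∀ a ∈ J, ∀ b ∈ J, a ≠ b → ¬ G.Adj a b := by
  intro t
  induction t with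
  | zero => intro S R _ _ ht _; omega
  | succ t ih =>
    intro S R hind hsum ht h
    obtain ⟨v, hv, hresp⟩ := h
    match v with
    | Sum.inr i =>
      have hiR : i ∉ R := by simpa using hv
      have hRlt : R.card < k - 1 := by
        rcases lt_or_ge R.card (k-1) with h' | h'
        · exact h'
        · exfalso
          have hle : R.card ≤ k - 1 := by
            simpa using Finset.card_le_card (Finset.subset_univ R)
          have : R = Finset.univ := Finset.eq_univ_of_card R (by simpa using le_antisymm hle h')
          exact hiR (this ▸ Finset.mem_univ i)
      obtain ⟨b, hb⟩ : S.Nonempty := Finset.card_pos.mp (by omega)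
      have h2 := hresp (Sum.inl b) (by simpa) (adj_inl_inr G)
      rw [move_rl] at h2
      exact absurd h2 (fun h2 => lemA t (S.erase b) (insert i R)
        (by rw [Finset.card_insert_of_notMem hiR, Finset.card_erase_of_mem hb]; omega)
        (by rw [Finset.card_insert_of_notMem hiR]; omega) h2)
    | Sum.inl a =>
      have haS : a ∉ S := by simpa using hv
      by_cases hnb : ∃ b ∈ S, G.Adj b a
      · obtain ⟨b, hbS, hba⟩ := hnb
        have h2 := hresp (Sum.inl b) (by simpa using hbS) ((adj_inl_inl G).mpr hba)
        rw [move_ll] at h2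
        have haS' : a ∉ S.erase b := fun h' => haS (Finset.mem_of_mem_erase h')
        have hS1 : 1 ≤ S.card := Finset.card_pos.mpr ⟨b, hbS⟩
        exact absurd h2 (fun h2 => lemA t (insert a (S.erase b)) R
          (by rw [Finset.card_insert_of_notMem haS', Finset.card_erase_of_mem hbS]; omega)
          (by omega) h2)
      · push_neg at hnb
        have hins : ∀ x ∈ insert a S, ∀ y ∈ insert a S, x ≠ y → ¬ G.Adj x y := by
          intro x hx y hy hxy hadj
          rcases Finset.mem_insert.mp hx with hxa | hxS
          · rcases Finset.mem_insert.mp hy with hya | hyS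
            · exact hxy (hxa.trans hya.symm)
            · have h' : G.Adj a y := by rwa [hxa] at hadj
              exact hnb y hyS h'.symm
          · rcases Finset.mem_insert.mp hy with hya | hyS
            · have h' : G.Adj x a := by rwa [hya] at hadj
              exact hnb x hxS h'
            · exact hind x hxS y hyS hxy hadj
        rcases Finset.eq_empty_or_nonempty R with rfl | ⟨i, hi⟩
        · refine ⟨insert a S, ?_, hins⟩
          rw [Finset.card_insert_of_notMem haS]
          simp at hsum ht ⊢
          omega
        · have hR1 : 1 ≤ R.card := Finset.card_pos.mpr ⟨i, hi⟩
          have h2 := hresp (Sum.inr i) (by simpa) (adj_inr_inl G)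
          rw [move_lr] at h2
          exact ih (insert a S) (R.erase i) hins
            (by rw [Finset.card_insert_of_notMem haS, Finset.card_erase_of_mem hi]; omega)
            (by rw [Finset.card_erase_of_mem hi]; omega) h2

/-- Lemma F: Attacker wins by attacking an independent set avoiding `S`. -/
lemma lemF : ∀ (n : ℕ) (J S : Finset V) (R : Finset (Fin (k-1))),
    J.card = n → n = R.card + 1 →
    (∀ a ∈ J, ∀ b ∈ J, a ≠ b → ¬ G.Adj a b) →
    (∀ a ∈ J, ∀ b ∈ S, ¬ G.Adj b a) →
    (∀ a ∈ J, a ∉ S) →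
    AttackerWinsIn (addUniv G k) n (guards k S R) := by
  intro n
  induction n with
  | zero => intro J S R _ hn _ _ _; omega
  | succ n ih =>
    intro J S R hJ hn hind hJS hJnS
    obtain ⟨a, ha⟩ : J.Nonempty := Finset.card_pos.mp (by omega)
    refine ⟨Sum.inl a, by simpa using hJnS a ha, ?_⟩
    rintro u hu hadj
    match u with
    | Sum.inl b =>
      have hbS : b ∈ S := by simpa using hu
      exact absurd ((adj_inl_inl G).mp hadj) (hJS a ha b hbS)
    | Sum.inr i =>
      have hiR : i ∈ R := by simpa using hu
      rw [move_lr]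
      have hR1 : 1 ≤ R.card := Finset.card_pos.mpr ⟨i, hiR⟩
      exact ih (J.erase a) (insert a S) (R.erase i)
        (by rw [Finset.card_erase_of_mem ha]; omega)
        (by rw [Finset.card_erase_of_mem hiR]; omega)
        (fun x hx y hy hxy => hind x (Finset.mem_of_mem_erase hx) y (Finset.mem_of_mem_erase hy) hxy)
        (by
          intro x hx b hb
          rcases Finset.mem_insert.mp hb with rfl | hb
          · have hxJ := Finset.mem_of_mem_erase hx
            have hxa := (Finset.mem_erase.mp hx).1
            exact hind b ha x hxJ (fun e => hxa e.symm)
          · exact hJS x (Finset.mem_of_mem_erase hx) b hb)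
        (by
          intro x hx
          have := Finset.mem_erase.mp hx
          simp only [Finset.mem_insert, not_or]
          exact ⟨this.1, hJnS x this.2⟩)


lemma guards_empty_univ :
    guards k (∅ : Finset V) Finset.univ = univGuards V k := by
  simp [guards, univGuards]

end Stmt17Aux

/-- `G` has an independent set of size `k` iff Attacker wins in at most `k` turns
on `(G', D)`, where `G'` adds `k-1` universal guarded vertices to `G`. -/
theorem stmt17 {V : Type*} [DecidableEq V] (G : SimpleGraph V) (k : ℕ)
    (hk : 1 ≤ k) :
    (∃ I : Finset V, I.card = k ∧ ∀ a ∈ I, ∀ b ∈ I, a ≠ b → ¬ G.Adj a b)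
      ↔ gameValue (addUniv G k) (univGuards V k) ≤ (k : ℕ∞) := by
  constructor
  · rintro ⟨I, hcard, hind⟩
    rw [gameValue]
    apply sInf_le
    refine ⟨k, rfl, ?_⟩
    have hw := Stmt17Aux.lemF (k := k) k I ∅ Finset.univ hcard
      (by simp [Finset.card_univ]; omega) hind (by simp) (by simp)
    rwa [Stmt17Aux.guards_empty_univ] at hw
  · intro h
    by_contra hno
    have hcard0 : (∅ : Finset V).card + (Finset.univ : Finset (Fin (k-1))).card = k - 1 := by
      simp
    have key : ∀ n ∈ {n : ℕ∞ | ∃ t : ℕ, n = (t:ℕ∞) ∧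
        AttackerWinsIn (addUniv G k) t (univGuards V k)}, ((k:ℕ∞) + 1) ≤ n := by
      rintro n ⟨t, rfl, hw⟩
      rw [← Stmt17Aux.guards_empty_univ] at hw
      by_contra hlt
      push_neg at hlt
      have htk : t ≤ k := by
        have : (t:ℕ∞) < ((k+1:ℕ):ℕ∞) := by push_cast; exact hlt
        have := Nat.cast_lt.mp this
        omega
      rcases eq_or_lt_of_le htk with heq | htlt
      · rw [heq] at hw
        exact hno (Stmt17Aux.lemB (k := k) hk k ∅ Finset.univ (by simp) hcard0
          (by simp [Finset.card_univ]; omega) hw)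
      · exact Stmt17Aux.lemA (k := k) t ∅ Finset.univ hcard0
          (by simp [Finset.card_univ]; omega) hw
    rw [gameValue] at h
    have h2 := le_sInf key
    have h3 := h2.trans h
    have : ((k+1:ℕ):ℕ∞) ≤ ((k:ℕ):ℕ∞) := by push_cast; exact h3
    have := Nat.cast_le.mp this
    omega
end

section
/- Let G = (A ∪ B, E) be a bipartite graph such that B has no isolated vertex and |A| < |B|. Then there exist a non-empty set A' ⊆ A and a set B' ⊆ B such that: (1) there is a matching M between A' and B' that covers A'; and (2) there is no edge between B' and A \ A'. -/
/-- Let `G = (A ∪ B, E)` be a bipartite graph such that `B` has no isolated vertex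
and `|A| < |B|`.  Then there exist a non-empty `A' ⊆ A` and `B' ⊆ B` such that
(1) there is a matching between `A'` and `B'` covering `A'` (encoded as an
injection `f` from `A'` into `B'` with `a` adjacent to `f a`); and
(2) there is no edge between `B'` and `A \ A'`. -/
theorem stmt18 {V : Type*} [Fintype V] [DecidableEq V] (G : SimpleGraph V)
    (A B : Finset V)
    (hpart : ∀ v, v ∈ A ↔ v ∉ B)
    (hbip : ∀ u v, G.Adj u v → (u ∈ A ∧ v ∈ B) ∨ (u ∈ B ∧ v ∈ A))
    (hiso : ∀ b ∈ B, ∃ a, G.Adj b a)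
    (hcard : A.card < B.card) :
    ∃ (A' B' : Finset V), A' ⊆ A ∧ A'.Nonempty ∧ B' ⊆ B ∧
      (∃ f : {a // a ∈ A'} → V, Function.Injective f ∧
        ∀ a : {a // a ∈ A'}, f a ∈ B' ∧ G.Adj a.1 (f a)) ∧
      (∀ b ∈ B', ∀ a ∈ A \ A', ¬ G.Adj b a) := by
  classical
  -- neighborhood (on the A side) of a set of B-vertices
  set NA : Finset V → Finset V := fun S => S.biUnion (fun b => G.neighborFinset b) with hNAdef
  have hmemNA : ∀ S a, a ∈ NA S ↔ ∃ b ∈ S, G.Adj b a := by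
    intro S a
    simp [hNAdef, SimpleGraph.mem_neighborFinset]
  have hBA : ∀ S, S ⊆ B → NA S ⊆ A := by
    intro S hS a ha
    obtain ⟨b, hb, hadj⟩ := (hmemNA S a).1 ha
    rcases hbip b a hadj with ⟨hbA, _⟩ | ⟨_, haA⟩
    · exact absurd (hS hb) ((hpart b).mp hbA)
    · exact haA
  -- Hall violators among subsets of B (for matchings of B into A)
  set F : Finset (Finset V) := B.powerset.filter (fun S => (NA S).card < S.card) with hFdef
  have hBF : B ∈ F := by
    refine Finset.mem_filter.2 ⟨Finset.mem_powerset.2 (Finset.Subset.refl B), ?_⟩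
    exact lt_of_le_of_lt (Finset.card_le_card (hBA B (Finset.Subset.refl B))) hcard
  obtain ⟨B', hB'F, hmin⟩ := Finset.exists_min_image F Finset.card ⟨B, hBF⟩
  have hB'B : B' ⊆ B := Finset.mem_powerset.1 (Finset.mem_filter.1 hB'F).1
  have hviol : (NA B').card < B'.card := (Finset.mem_filter.1 hB'F).2
  -- minimality
  have hminS : ∀ S, S ⊆ B → S.card < B'.card → S.card ≤ (NA S).card := by
    intro S hSB hS
    by_contra h
    push_neg at h
    have : S ∈ F := Finset.mem_filter.2 ⟨Finset.mem_powerset.2 hSB, h⟩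
    exact absurd (hmin S this) (by omega)
  set A' : Finset V := NA B' with hA'def
  have hA'A : A' ⊆ A := hBA B' hB'B
  have hB'ne : B'.Nonempty := Finset.card_pos.1 (by omega)
  have hA'ne : A'.Nonempty := by
    obtain ⟨b, hb⟩ := hB'ne
    obtain ⟨a, hadj⟩ := hiso b (hB'B hb)
    exact ⟨a, (hmemNA B' a).2 ⟨b, hb, hadj⟩⟩
  -- Hall's condition for A' into B'
  have hall : ∀ T : Finset V, T ⊆ A' →
      T.card ≤ (T.biUnion (fun a => G.neighborFinset a ∩ B')).card := by
    intro T hTA'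
    by_contra h
    push_neg at h
    set NT : Finset V := T.biUnion (fun a => G.neighborFinset a ∩ B') with hNTdef
    have hTne : T.Nonempty := Finset.card_pos.1 (by omega)
    have hNTB' : NT ⊆ B' := by
      intro b hb
      obtain ⟨a, _, hb'⟩ := Finset.mem_biUnion.1 hb
      exact (Finset.mem_inter.1 hb').2
    have hNTne : NT.Nonempty := by
      obtain ⟨t, ht⟩ := hTne
      obtain ⟨b, hb, hadj⟩ := (hmemNA B' t).1 (hTA' ht)
      exact ⟨b, Finset.mem_biUnion.2 ⟨t, ht, Finset.mem_inter.2
        ⟨(SimpleGraph.mem_neighborFinset G t b).2 hadj.symm, hb⟩⟩⟩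
    set S : Finset V := B' \ NT with hSdef
    have e1 : S.card + NT.card = B'.card := Finset.card_sdiff_add_card_eq_card hNTB'
    have hScard : S.card < B'.card := by
      have := Finset.card_pos.2 hNTne
      omega
    have e2 : S.card ≤ (NA S).card :=
      hminS S (fun x hx => hB'B (Finset.mem_sdiff.1 hx).1) hScard
    have hNASsub : NA S ⊆ NA B' \ T := by
      intro a ha
      obtain ⟨b, hb, hadj⟩ := (hmemNA S a).1 ha
      obtain ⟨hbB', hbNT⟩ := Finset.mem_sdiff.1 hb
      refine Finset.mem_sdiff.2 ⟨(hmemNA B' a).2 ⟨b, hbB', hadj⟩, ?_⟩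
      intro haT
      exact hbNT (Finset.mem_biUnion.2 ⟨a, haT, Finset.mem_inter.2
        ⟨(SimpleGraph.mem_neighborFinset G a b).2 hadj.symm, hbB'⟩⟩)
    have e3 : (NA S).card + T.card ≤ (NA B').card := by
      have h1 : (NA S).card ≤ (NA B' \ T).card := Finset.card_le_card hNASsub
      have h2 : (NA B' \ T).card + T.card = (NA B').card :=
        Finset.card_sdiff_add_card_eq_card hTA'
      omega
    have e4 : (NA B').card = A'.card := by rw [hA'def]
    omega
  -- apply Hall's marriage theorem
  set t : {a // a ∈ A'} → Finset V := fun a => G.neighborFinset a.1 ∩ B' with htdef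
  have hhall : ∀ s : Finset {a // a ∈ A'}, s.card ≤ (s.biUnion t).card := by
    intro s
    have hcard' : (s.image Subtype.val).card = s.card :=
      Finset.card_image_of_injective s Subtype.val_injective
    have hsub : s.image Subtype.val ⊆ A' := by
      intro a ha
      obtain ⟨⟨a', ha'⟩, _, rfl⟩ := Finset.mem_image.1 ha
      exact ha'
    have heq : (s.image Subtype.val).biUnion (fun a => G.neighborFinset a ∩ B')
        = s.biUnion t := by
      rw [Finset.image_biUnion]
    have := hall (s.image Subtype.val) hsub
    rw [hcard', heq] at this
    exact this
  obtain ⟨f, hfinj, hf⟩ := (Finset.all_card_le_biUnion_card_iff_exists_injective t).1 hhall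
  refine ⟨A', B', hA'A, hA'ne, hB'B, ⟨f, hfinj, ?_⟩, ?_⟩
  · intro a
    have := hf a
    rw [htdef] at this
    obtain ⟨h1, h2⟩ := Finset.mem_inter.1 this
    exact ⟨h2, (SimpleGraph.mem_neighborFinset G a.1 (f a)).1 h1⟩
  · intro b hb a ha hadj
    obtain ⟨haA, haA'⟩ := Finset.mem_sdiff.1 ha
    exact haA' ((hmemNA B' a).2 ⟨b, hb, hadj⟩)
end

section
/- Let G = (A ∪ B, E) be a bipartite graph with set of guards D = B, such that B has no isolated vertex and |A| < |B|. Let A' ⊆ A be non-empty and B' ⊆ B be such that there is a matching between A' and B' covering A' and there is no edge between B' and A \ A'. Let G' = G − (A' ∪ B') and D' = D \ B'. Then t_G(D) = t_{G'}(D'). -/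
lemma attackerWinsIn_succ_iff {V : Type*} [DecidableEq V] (G : SimpleGraph V)
    (t : ℕ) (D : Finset V) :
    AttackerWinsIn G (t + 1) D ↔ ∃ v, v ∉ D ∧
      ∀ u ∈ D, G.Adj u v → AttackerWinsIn G t (insert v (D.erase u)) := Iff.rfl

lemma attackerWinsIn_mono {V : Type*} [DecidableEq V] (G : SimpleGraph V) :
    ∀ t (D : Finset V), AttackerWinsIn G t D → AttackerWinsIn G (t + 1) D := by
  intro t
  induction t with
  | zero => exact fun D h => h.elim
  | succ t ih =>
    intro D h
    obtain ⟨v, hv, H⟩ := h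
    exact ⟨v, hv, fun u hu hadj => ih _ (H u hu hadj)⟩

/-- Let `G = (A ∪ B, E)` be bipartite with guard set `D = B`, where `B` has no
isolated vertex and `|A| < |B|`.  Let `A' ⊆ A` be non-empty and `B' ⊆ B` be such
that there is a matching between `A'` and `B'` covering `A'` and no edge between
`B'` and `A \ A'`.  Let `G' = G − (A' ∪ B')` (the induced subgraph on the
remaining vertices) and `D' = D \ B'`.  Then `t_G(D) = t_{G'}(D')`. -/
theorem stmt19 {V : Type*} [Fintype V] [DecidableEq V] (G : SimpleGraph V)
    (A B : Finset V)
    (hpart : ∀ v, v ∈ A ↔ v ∉ B)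
    (hbip : ∀ u v, G.Adj u v → (u ∈ A ∧ v ∈ B) ∨ (u ∈ B ∧ v ∈ A))
    (hiso : ∀ b ∈ B, ∃ a, G.Adj b a)
    (hcard : A.card < B.card)
    (A' B' : Finset V) (hA'sub : A' ⊆ A) (hA'ne : A'.Nonempty) (hB'sub : B' ⊆ B)
    (f : {a // a ∈ A'} → V) (hfinj : Function.Injective f)
    (hf : ∀ a : {a // a ∈ A'}, f a ∈ B' ∧ G.Adj a.1 (f a))
    (hNoEdge : ∀ b ∈ B', ∀ a ∈ A \ A', ¬ G.Adj b a) :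
    gameValue G B =
      gameValue
        (SimpleGraph.comap (Subtype.val : {v : V // v ∉ A' ∪ B'} → V) G)
        ((B \ B').subtype fun v => v ∉ A' ∪ B') := by
  classical
  set G' := SimpleGraph.comap (Subtype.val : {v : V // v ∉ A' ∪ B'} → V) G with hG'
  -- a vertex of B' is adjacent only to vertices of A'
  have hB'A : ∀ u v, u ∈ B' → G.Adj u v → v ∈ A' := by
    intro u v hu hadj
    have huB : u ∈ B := hB'sub hu
    rcases hbip u v hadj with ⟨huA, _⟩ | ⟨_, hvA⟩
    · exact absurd huB ((hpart u).1 huA)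
    · by_contra hv'
      exact hNoEdge u hu v (Finset.mem_sdiff.2 ⟨hvA, hv'⟩) hadj
  have hA'B'disj : ∀ x, x ∈ A' → x ∉ B' := by
    intro x hx hx'
    exact (hpart x).1 (hA'sub hx) (hB'sub hx')
  -- region guard configurations
  set S : Finset {a // a ∈ A'} → Finset V :=
    fun T => (B' \ T.image f) ∪ T.image (fun a => a.1) with hS
  have hSsub : ∀ T x, x ∈ S T → x ∈ A' ∪ B' := by
    intro T x hx
    rcases Finset.mem_union.1 hx with hx | hx
    · exact Finset.mem_union_right _ (Finset.mem_sdiff.1 hx).1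
    · obtain ⟨a, _, rfl⟩ := Finset.mem_image.1 hx
      exact Finset.mem_union_left _ a.2
  -- Lemma 1 : attacker winning in G' gives attacker winning in G
  have lem1 : ∀ t (D' : Finset {v : V // v ∉ A' ∪ B'}),
      AttackerWinsIn G' t D' →
      AttackerWinsIn G t (B' ∪ D'.image Subtype.val) := by
    intro t
    induction t with
    | zero => exact fun D' h => h.elim
    | succ t ih =>
      intro D' h
      obtain ⟨v', hv', H⟩ := h
      refine ⟨v'.1, ?_, ?_⟩
      · intro hmem
        rcases Finset.mem_union.1 hmem with hm | hm
        · exact v'.2 (Finset.mem_union_right _ hm)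
        · obtain ⟨y, hy, hyx⟩ := Finset.mem_image.1 hm
          exact hv' (by rwa [Subtype.ext hyx] at hy)
      · intro u hu hadj
        rcases Finset.mem_union.1 hu with huB' | huimg
        · exact absurd (Finset.mem_union_left _ (hB'A u v'.1 huB' hadj)) v'.2
        · obtain ⟨u', hu', rfl⟩ := Finset.mem_image.1 huimg
          have hadj' : G'.Adj u' v' := hadj
          have h2 := ih _ (H u' hu' hadj')
          have hu0 : u'.1 ∉ B' := fun hc => u'.2 (Finset.mem_union_right _ hc)
          have hset : B' ∪ ((insert v' (D'.erase u')).image Subtype.val)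
              = insert v'.1 ((B' ∪ D'.image Subtype.val).erase u'.1) := by
            rw [Finset.image_insert, Finset.image_erase Subtype.val_injective,
              Finset.union_insert, Finset.erase_union_distrib,
              Finset.erase_eq_of_notMem hu0]
          rwa [hset] at h2
  -- Lemma 2 : attacker winning in G gives attacker winning in G'
  have lem2 : ∀ t (T : Finset {a // a ∈ A'}) (D' : Finset {v : V // v ∉ A' ∪ B'}),
      AttackerWinsIn G t (S T ∪ D'.image Subtype.val) →
      AttackerWinsIn G' t D' := by
    intro t
    induction t with
    | zero => exact fun T D' h => h.elim
    | succ t ih =>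
      intro T D' h
      obtain ⟨v, hv, H⟩ := h
      by_cases hvA' : v ∈ A'
      · -- attack inside A' : answer with the matched guard f ⟨v, hvA'⟩
        set a : {a // a ∈ A'} := ⟨v, hvA'⟩ with ha
        have hfa : f a ∉ T.image f := by
          intro hc
          obtain ⟨b, hb, hba⟩ := Finset.mem_image.1 hc
          have hba' : b = a := hfinj hba
          exact hv (Finset.mem_union_left _ (Finset.mem_union_right _
            (Finset.mem_image.2 ⟨b, hb, congrArg Subtype.val hba'⟩)))
        have hfamem : f a ∈ S T ∪ D'.image Subtype.val :=
          Finset.mem_union_left _ (Finset.mem_union_left _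
            (Finset.mem_sdiff.2 ⟨(hf a).1, hfa⟩))
        have hadj : G.Adj (f a) v := ((hf a).2).symm
        have h2 := H (f a) hfamem hadj
        have hfaA' : f a ∉ T.image (fun a => a.1) := by
          intro hc
          obtain ⟨b, _, hb⟩ := Finset.mem_image.1 hc
          exact hA'B'disj (f a) (hb ▸ b.2) (hf a).1
        have hfaimg : f a ∉ D'.image Subtype.val := by
          intro hc
          obtain ⟨y, _, hy⟩ := Finset.mem_image.1 hc
          exact y.2 (hy ▸ Finset.mem_union_right _ (hf a).1)
        have hset : insert v ((S T ∪ D'.image Subtype.val).erase (f a))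
            = S (insert a T) ∪ D'.image Subtype.val := by
          simp only [hS, Finset.image_insert]
          rw [Finset.sdiff_insert, Finset.erase_union_distrib,
            Finset.erase_union_distrib, Finset.erase_eq_of_notMem hfaA',
            Finset.erase_eq_of_notMem hfaimg, Finset.union_insert,
            Finset.insert_union]
        rw [hset] at h2
        exact attackerWinsIn_mono _ t _ (ih (insert a T) D' h2)
      · by_cases hvB' : v ∈ B'
        · -- attack inside B' : the vertex is some vacated f b with b ∈ T
          have hvT : v ∈ T.image f := by
            by_contra hc
            exact hv (Finset.mem_union_left _ (Finset.mem_union_left _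
              (Finset.mem_sdiff.2 ⟨hvB', hc⟩)))
          obtain ⟨b, hb, hbv⟩ := Finset.mem_image.1 hvT
          have hbmem : b.1 ∈ S T ∪ D'.image Subtype.val :=
            Finset.mem_union_left _ (Finset.mem_union_right _
              (Finset.mem_image.2 ⟨b, hb, rfl⟩))
          have hadj : G.Adj b.1 v := hbv ▸ (hf b).2
          have h2 := H b.1 hbmem hadj
          have hbB : b.1 ∉ B' \ T.image f := fun hc =>
            hA'B'disj b.1 b.2 (Finset.mem_sdiff.1 hc).1
          have hbimg : b.1 ∉ D'.image Subtype.val := by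
            intro hc
            obtain ⟨y, _, hy⟩ := Finset.mem_image.1 hc
            exact y.2 (hy ▸ Finset.mem_union_left _ b.2)
          have hset : insert v ((S T ∪ D'.image Subtype.val).erase b.1)
              = S (T.erase b) ∪ D'.image Subtype.val := by
            simp only [hS]
            rw [Finset.image_erase hfinj, Finset.image_erase Subtype.val_injective,
              hbv, Finset.sdiff_erase hvB', Finset.erase_union_distrib,
              Finset.erase_union_distrib, Finset.erase_eq_of_notMem hbB,
              Finset.erase_eq_of_notMem hbimg, Finset.insert_union,
              Finset.insert_union]
          rw [hset] at h2
          exact attackerWinsIn_mono _ t _ (ih (T.erase b) D' h2)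
        · -- attack outside the region : mirror it in G'
          have hvp : v ∉ A' ∪ B' := by
            intro hc
            rcases Finset.mem_union.1 hc with hc | hc
            exacts [hvA' hc, hvB' hc]
          refine ⟨⟨v, hvp⟩, ?_, ?_⟩
          · intro hc
            exact hv (Finset.mem_union_right _ (Finset.mem_image.2 ⟨_, hc, rfl⟩))
          · intro u' hu' hadj'
            have humem : u'.1 ∈ S T ∪ D'.image Subtype.val :=
              Finset.mem_union_right _ (Finset.mem_image.2 ⟨u', hu', rfl⟩)
            have hadj : G.Adj u'.1 v := hadj'
            have h2 := H u'.1 humem hadj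
            have huS : u'.1 ∉ S T := fun hc => u'.2 (hSsub T u'.1 hc)
            have hset : insert v ((S T ∪ D'.image Subtype.val).erase u'.1)
                = S T ∪ ((insert ⟨v, hvp⟩ (D'.erase u')).image Subtype.val) := by
              rw [Finset.image_insert, Finset.image_erase Subtype.val_injective,
                Finset.union_insert, Finset.erase_union_distrib,
                Finset.erase_eq_of_notMem huS]
            rw [hset] at h2
            exact ih T _ h2
  -- identification of the initial configurations
  have hDval : ((B \ B').subtype fun v => v ∉ A' ∪ B').image Subtype.val = B \ B' := by
    ext x
    simp only [Finset.mem_image, Finset.mem_subtype]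
    constructor
    · rintro ⟨y, hy, rfl⟩; exact hy
    · intro hx
      have hxp : x ∉ A' ∪ B' := by
        intro hc
        rcases Finset.mem_union.1 hc with hc | hc
        · exact (hpart x).1 (hA'sub hc) (Finset.mem_sdiff.1 hx).1
        · exact (Finset.mem_sdiff.1 hx).2 hc
      exact ⟨⟨x, hxp⟩, hx, rfl⟩
  have hBeq : S ∅ ∪ ((B \ B').subtype fun v => v ∉ A' ∪ B').image Subtype.val = B := by
    rw [hDval]
    simp only [hS, Finset.image_empty, Finset.sdiff_empty, Finset.union_empty]
    exact Finset.union_sdiff_of_subset hB'sub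
  have key : ∀ t, AttackerWinsIn G t B ↔
      AttackerWinsIn G' t ((B \ B').subtype fun v => v ∉ A' ∪ B') := by
    intro t
    constructor
    · intro h
      exact lem2 t ∅ _ (by rwa [hBeq])
    · intro h
      have h2 := lem1 t _ h
      rw [hDval, Finset.union_sdiff_of_subset hB'sub] at h2
      exact h2
  have hsets : {n : ℕ∞ | ∃ t : ℕ, n = (t : ℕ∞) ∧ AttackerWinsIn G t B}
      = {n : ℕ∞ | ∃ t : ℕ, n = (t : ℕ∞) ∧
          AttackerWinsIn G' t ((B \ B').subtype fun v => v ∉ A' ∪ B')} :=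
    Set.ext fun n => exists_congr fun t => and_congr_right fun _ => key t
  unfold gameValue
  rw [hsets]
end
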